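/- arXiv:2212.03902 — 4 statements merged into one kernel-verified Lean document; each statement's English description precedes it below -/
import Mathlib

section
/- Three-gap structure for irrational rotation: let α ∈ (0,1) be irrational with continued fraction denominators q_n, and set K = q_n + q_{n+1} - 1. Then the points {kα mod 1 : k = 0,…,K} partition the circle ℝ/ℤ into exactly q_n gaps of length ‖q_{n+1}α‖ and q_{n+1} gaps of length ‖q_n α‖. -/
/-- The Gauss map iteration defining the continued fraction expansion of `α`. -/
noncomputable def gaussIter (α : ℝ) : ℕ → ℝ
  | 0 => α
  | n + 1 => Int.fract (gaussIter α n)⁻¹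

/-- The `(n+1)`-st partial quotient `a_{n+1}` of the continued fraction of `α ∈ (0,1)`. -/
noncomputable def cfA (α : ℝ) (n : ℕ) : ℤ := ⌊(gaussIter α n)⁻¹⌋

/-- The denominators `q_n` of the continued fraction convergents of `α ∈ (0,1)`:
`q_0 = 1`, `q_1 = a_1`, `q_{n+2} = a_{n+2} q_{n+1} + q_n`. -/
noncomputable def cfQ (α : ℝ) : ℕ → ℤ
  | 0 => 1
  | 1 => cfA α 0
  | n + 2 => cfA α (n + 1) * cfQ α (n + 1) + cfQ α n

/-- `‖x‖`: the distance from a real number `x` to the nearest integer. -/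
noncomputable def distNearestInt (x : ℝ) : ℝ := |x - round x|

open MeasureTheory
open scoped ENNReal

/-- numerators -/
noncomputable def cfP (α : ℝ) : ℕ → ℤ
  | 0 => 0
  | 1 => 1
  | n + 2 => cfA α (n + 1) * cfP α (n + 1) + cfP α n

/-- `β_m = ‖q_m α‖`, as a product of Gauss iterates. -/
noncomputable def cfB (α : ℝ) (m : ℕ) : ℝ := ∏ i ∈ Finset.range (m + 1), gaussIter α i

set_option linter.unusedSectionVars false

section arith

variable {α : ℝ} (hα : α ∈ Set.Ioo (0 : ℝ) 1) (hirr : Irrational α)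
include hα hirr

lemma gauss_mem : ∀ m, gaussIter α m ∈ Set.Ioo (0 : ℝ) 1 ∧ Irrational (gaussIter α m) := by
  intro m
  induction m with
  | zero => exact ⟨hα, hirr⟩
  | succ k ih =>
    obtain ⟨⟨h0, h1⟩, hi⟩ := ih
    have hinv : Irrational (gaussIter α k)⁻¹ := hi.inv
    have hfr : Irrational (Int.fract (gaussIter α k)⁻¹) := by
      unfold Int.fract
      exact hinv.sub_intCast _
    have hne : Int.fract (gaussIter α k)⁻¹ ≠ 0 := fun hh =>
      hfr.ne_int 0 (by simpa using hh)
    exact ⟨⟨lt_of_le_of_ne (Int.fract_nonneg _) (Ne.symm hne), Int.fract_lt_one _⟩, hfr⟩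

lemma gauss_pos (m : ℕ) : 0 < gaussIter α m := (gauss_mem hα hirr m).1.1
lemma gauss_lt_one (m : ℕ) : gaussIter α m < 1 := (gauss_mem hα hirr m).1.2

lemma cfA_ge_one (m : ℕ) : 1 ≤ cfA α m := by
  have h0 := gauss_pos hα hirr m
  have h1 := gauss_lt_one hα hirr m
  have h2 : gaussIter α m * 1 < gaussIter α m * (gaussIter α m)⁻¹ := by
    rw [mul_inv_cancel₀ (ne_of_gt h0)]; linarith
  have : (1 : ℝ) ≤ (gaussIter α m)⁻¹ := le_of_lt (lt_of_mul_lt_mul_left h2 h0.le)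
  exact Int.le_floor.2 (by exact_mod_cast this)

lemma cfB_pos (m : ℕ) : 0 < cfB α m :=
  Finset.prod_pos fun i _ => gauss_pos hα hirr i

omit hα hirr in
lemma cfB_succ (m : ℕ) : cfB α (m + 1) = cfB α m * gaussIter α (m + 1) :=
  Finset.prod_range_succ _ _

omit hα hirr in
lemma cfB_zero : cfB α 0 = α := by simp [cfB]; rfl

lemma cfB_lt_one (m : ℕ) : cfB α m < 1 := by
  induction m with
  | zero => rw [cfB_zero]; exact hα.2
  | succ k ih =>
    rw [cfB_succ]
    calc cfB α k * gaussIter α (k + 1) < 1 * 1 := by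
          apply mul_lt_mul' ih.le (gauss_lt_one hα hirr _) (gauss_pos hα hirr _).le one_pos
      _ = 1 := by ring

lemma cfB_lt (m : ℕ) : cfB α (m + 1) < cfB α m := by
  rw [cfB_succ]
  nth_rewrite 2 [show cfB α m = cfB α m * 1 by ring]
  exact mul_lt_mul_of_pos_left (gauss_lt_one hα hirr _) (cfB_pos hα hirr _)

lemma cfB_mono {m m' : ℕ} (h : m ≤ m') : cfB α m' ≤ cfB α m := by
  induction m' with
  | zero => rw [Nat.le_zero.1 h]
  | succ k ih =>
    rcases Nat.lt_or_ge m (k+1) with h' | h'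
    · exact le_trans (cfB_lt hα hirr k).le (ih (by omega))
    · rw [le_antisymm h h']

omit hα hirr in
lemma gauss_succ (m : ℕ) :
    gaussIter α (m + 1) = (gaussIter α m)⁻¹ - ⌊(gaussIter α m)⁻¹⌋ := rfl

/-- main identity `q_m α - p_m = (-1)^m β_m`. -/
lemma qp_eq : ∀ m : ℕ, (cfQ α m : ℝ) * α - (cfP α m : ℝ) = (-1) ^ m * cfB α m := by
  have key : ∀ m : ℕ,
      ((cfQ α m : ℝ) * α - (cfP α m : ℝ) = (-1) ^ m * cfB α m) ∧
      ((cfQ α (m+1) : ℝ) * α - (cfP α (m+1) : ℝ) = (-1) ^ (m+1) * cfB α (m+1)) := by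
    intro m
    induction m with
    | zero =>
      constructor
      · simp [cfQ, cfP, cfB_zero]
      · have hα0 : α ≠ 0 := ne_of_gt hα.1
        have h1 : gaussIter α 1 = α⁻¹ - (⌊α⁻¹⌋ : ℝ) := gauss_succ 0
        have hB1 : cfB α 1 = α * (α⁻¹ - (cfA α 0 : ℝ)) := by
          rw [cfB_succ, cfB_zero, h1]; rfl
        have hQ1 : cfQ α 1 = cfA α 0 := rfl
        have hP1 : cfP α 1 = (1 : ℤ) := rfl
        rw [hQ1, hP1, hB1]
        push_cast
        field_simp
        ring
    | succ k ih =>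
      refine ⟨ih.2, ?_⟩
      have e1 := ih.1
      have e2 := ih.2
      have hrecQ : (cfQ α (k+2) : ℝ) = (cfA α (k+1) : ℝ) * (cfQ α (k+1) : ℝ) + (cfQ α k : ℝ) := by
        rw [show cfQ α (k+2) = cfA α (k+1) * cfQ α (k+1) + cfQ α k from rfl]; push_cast; ring
      have hrecP : (cfP α (k+2) : ℝ) = (cfA α (k+1) : ℝ) * (cfP α (k+1) : ℝ) + (cfP α k : ℝ) := by
        rw [show cfP α (k+2) = cfA α (k+1) * cfP α (k+1) + cfP α k from rfl]; push_cast; ring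
      have ht : gaussIter α (k+1) * gaussIter α (k+2) = 1 - (cfA α (k+1) : ℝ) * gaussIter α (k+1) := by
        have h2 : gaussIter α (k+2) = (gaussIter α (k+1))⁻¹ - (⌊(gaussIter α (k+1))⁻¹⌋ : ℝ) :=
          gauss_succ (k+1)
        have hne : gaussIter α (k+1) ≠ 0 := ne_of_gt (gauss_pos hα hirr _)
        rw [h2, show ((⌊(gaussIter α (k+1))⁻¹⌋ : ℤ) : ℝ) = (cfA α (k+1) : ℝ) from rfl]
        field_simp
      have hB2' : cfB α (k+2) = cfB α k - (cfA α (k+1) : ℝ) * cfB α (k+1) := by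
        rw [show cfB α (k+2) = cfB α (k+1) * gaussIter α (k+2) from cfB_succ (k+1),
           show cfB α (k+1) = cfB α k * gaussIter α (k+1) from cfB_succ k]
        linear_combination (cfB α k) * ht
      have hp1 : (-1:ℝ)^(k+1) = -(-1:ℝ)^k := by rw [pow_succ]; ring
      have hp2 : (-1:ℝ)^(k+2) = (-1:ℝ)^k := by rw [pow_succ, pow_succ]; ring
      rw [hrecQ, hrecP, hp2]
      rw [hp1] at e2
      linear_combination (cfA α (k+1) : ℝ) * e2 + e1 - ((-1:ℝ)^k) * hB2'
  exact fun m => (key m).1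

omit hα hirr in
lemma det_eq : ∀ m : ℕ, cfP α (m+1) * cfQ α m - cfP α m * cfQ α (m+1) = (-1) ^ m := by
  intro m
  induction m with
  | zero => simp [cfP, cfQ]
  | succ k ih =>
    have h1 : cfP α (k+2) = cfA α (k+1) * cfP α (k+1) + cfP α k := rfl
    have h2 : cfQ α (k+2) = cfA α (k+1) * cfQ α (k+1) + cfQ α k := rfl
    rw [h1, h2, pow_succ]
    linear_combination (-1 : ℤ) * ih

lemma cfQ_ge_one : ∀ m, 1 ≤ cfQ α m := by
  have key : ∀ m, 1 ≤ cfQ α m ∧ 1 ≤ cfQ α (m+1) := by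
    intro m
    induction m with
    | zero => exact ⟨le_refl 1, cfA_ge_one hα hirr 0⟩
    | succ k ih =>
      refine ⟨ih.2, ?_⟩
      have ha := cfA_ge_one hα hirr (k+1)
      have h2 : cfQ α (k+2) = cfA α (k+1) * cfQ α (k+1) + cfQ α k := rfl
      rw [h2]
      nlinarith [ih.1, ih.2]
  exact fun m => (key m).1

lemma cfQ_add_le (m : ℕ) : cfQ α m + cfQ α (m+1) ≤ cfQ α (m+2) := by
  have ha := cfA_ge_one hα hirr (m+1)
  have h2 : cfQ α (m+2) = cfA α (m+1) * cfQ α (m+1) + cfQ α m := rfl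
  rw [h2]
  nlinarith [cfQ_ge_one hα hirr (m+1), cfQ_ge_one hα hirr m]

lemma cfQ_lt {m : ℕ} (hm : 1 ≤ m) : cfQ α m < cfQ α (m+1) := by
  obtain ⟨k, rfl⟩ : ∃ k, m = k + 1 := ⟨m - 1, by omega⟩
  have h2 : cfQ α (k+2) = cfA α (k+1) * cfQ α (k+1) + cfQ α k := rfl
  rw [h2]
  nlinarith [cfA_ge_one hα hirr (k+1), cfQ_ge_one hα hirr (k+1), cfQ_ge_one hα hirr k]

lemma cfB_one_lt_half : cfB α 1 < 1/2 := by
  have hq1 := qp_eq hα hirr 1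
  have hB1 : cfB α 1 = 1 - (cfA α 0 : ℝ) * α := by
    have hQ1 : cfQ α 1 = cfA α 0 := rfl
    have hP1 : cfP α 1 = (1 : ℤ) := rfl
    rw [hQ1, hP1] at hq1
    push_cast at hq1
    nlinarith [hq1]
  have hfl : (cfA α 0 : ℝ) ≤ α⁻¹ := Int.floor_le (gaussIter α 0)⁻¹
  have hfl2 : α⁻¹ < (cfA α 0 : ℝ) + 1 := Int.lt_floor_add_one (gaussIter α 0)⁻¹
  have ha1 : (1 : ℝ) ≤ (cfA α 0 : ℝ) := by exact_mod_cast cfA_ge_one hα hirr 0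
  have hαpos := hα.1
  rcases le_or_gt ((cfA α 0 : ℝ)) 1 with h | h
  · -- a₁ = 1, so α⁻¹ < 2, so 1 < 2α
    have h2 : α⁻¹ < 2 := by linarith
    have h3 : α⁻¹ * α < 2 * α := mul_lt_mul_of_pos_right h2 hαpos
    rw [inv_mul_cancel₀ (ne_of_gt hαpos)] at h3
    nlinarith [hB1]
  · -- a₁ ≥ 2 so 2 ≤ α⁻¹ so 2α ≤ 1
    have h2 : (2 : ℝ) ≤ (cfA α 0 : ℝ) := by
      have : (1 : ℤ) < cfA α 0 := by exact_mod_cast h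
      exact_mod_cast this
    have h3 : (2 : ℝ) * α ≤ α⁻¹ * α := mul_le_mul_of_nonneg_right (le_trans h2 hfl) hαpos.le
    rw [inv_mul_cancel₀ (ne_of_gt hαpos)] at h3
    have := cfB_lt hα hirr 0
    rw [cfB_zero] at this
    linarith

lemma cfB_lt_half {m : ℕ} (hm : 1 ≤ m) : cfB α m < 1/2 :=
  lt_of_le_of_lt (cfB_mono hα hirr hm) (cfB_one_lt_half hα hirr)

lemma dist_eq_cfB {m : ℕ} (hm : 1 ≤ m) :
    distNearestInt ((cfQ α m : ℝ) * α) = cfB α m := by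
  have hq := qp_eq hα hirr m
  have hB := cfB_lt_half hα hirr hm
  have hBpos := cfB_pos hα hirr m
  have he : (cfQ α m : ℝ) * α = (cfP α m : ℝ) + (-1)^m * cfB α m := by linarith
  have hb : -(cfB α m) ≤ (-1:ℝ)^m * cfB α m ∧ (-1:ℝ)^m * cfB α m ≤ cfB α m := by
    rcases Nat.even_or_odd m with he' | ho
    · rw [he'.neg_one_pow]; constructor <;> linarith
    · rw [ho.neg_one_pow]; constructor <;> linarith
  have habs : |(-1:ℝ)^m * cfB α m| = cfB α m := by
    rcases Nat.even_or_odd m with he' | ho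
    · rw [he'.neg_one_pow, one_mul, abs_of_pos hBpos]
    · rw [ho.neg_one_pow, neg_one_mul, abs_neg, abs_of_pos hBpos]
  have hround : round ((cfQ α m : ℝ) * α) = cfP α m := by
    rw [he, round_eq]
    have h1 : (cfP α m : ℝ) + (-1)^m * cfB α m + 1/2
        = (cfP α m : ℝ) + ((-1)^m * cfB α m + 1/2) := by ring
    rw [h1, Int.floor_intCast_add]
    have h0 : ⌊(-1:ℝ)^m * cfB α m + 1/2⌋ = 0 := by
      apply Int.floor_eq_zero_iff.2
      simp only [Set.mem_Ico]
      constructor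
      · linarith [hb.1]
      · linarith [hb.2]
    rw [h0, add_zero]
  rw [distNearestInt, hround, he]
  rw [show (cfP α m : ℝ) + (-1)^m * cfB α m - (cfP α m : ℝ) = (-1)^m * cfB α m by ring, habs]

lemma sum_identity (m : ℕ) :
    (cfQ α (m+1) : ℝ) * cfB α m + (cfQ α m : ℝ) * cfB α (m+1) = 1 := by
  have h1 := qp_eq hα hirr m
  have h2 := qp_eq hα hirr (m+1)
  have hd := det_eq (α := α) m
  have hd' : (cfP α (m+1) : ℝ) * (cfQ α m : ℝ) - (cfP α m : ℝ) * (cfQ α (m+1) : ℝ)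
      = (-1:ℝ)^m := by exact_mod_cast congrArg (fun z : ℤ => (z : ℝ)) hd
  have hsq : ((-1:ℝ)^m) * ((-1:ℝ)^m) = 1 := by
    rcases Nat.even_or_odd m with he | ho
    · rw [he.neg_one_pow]; norm_num
    · rw [ho.neg_one_pow]; norm_num
  have hp1 : (-1:ℝ)^(m+1) = -(-1:ℝ)^m := by rw [pow_succ]; ring
  rw [hp1] at h2
  linear_combination (-((-1:ℝ)^m * (cfQ α (m+1) : ℝ))) * h1 + ((-1:ℝ)^m * (cfQ α m : ℝ)) * h2
    + ((-1:ℝ)^m) * hd'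
    - ((cfQ α (m+1) : ℝ) * cfB α m + (cfQ α m : ℝ) * cfB α (m+1) - 1) * hsq

lemma best_approx (m : ℕ) (r s : ℤ) (hr0 : r ≠ 0) (hr : |r| < cfQ α (m+1)) :
    cfB α m ≤ |(r : ℝ) * α - (s : ℝ)| := by
  have hd := det_eq (α := α) m
  have hDD : ((-1:ℤ)^m) * ((-1:ℤ)^m) = 1 := by
    rw [← pow_add]; exact Even.neg_one_pow ⟨m, rfl⟩
  obtain ⟨x, y, hxy, hxy'⟩ :
      ∃ x y : ℤ, x * cfQ α m + y * cfQ α (m+1) = r ∧ x * cfP α m + y * cfP α (m+1) = s := by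
    refine ⟨(-1)^m * (r * cfP α (m+1) - s * cfQ α (m+1)),
            (-1)^m * (s * cfQ α m - r * cfP α m), ?_, ?_⟩
    · linear_combination ((-1:ℤ)^m * r) * hd + r * hDD
    · linear_combination ((-1:ℤ)^m * s) * hd + s * hDD
  have hq0 := qp_eq hα hirr m
  have hq1 := qp_eq hα hirr (m+1)
  have hp1 : (-1:ℝ)^(m+1) = -(-1:ℝ)^m := by rw [pow_succ]; ring
  rw [hp1] at hq1
  have hxyR : (x:ℝ) * (cfQ α m : ℝ) + (y:ℝ) * (cfQ α (m+1) : ℝ) = (r:ℝ) := by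
    exact_mod_cast congrArg (fun z : ℤ => (z : ℝ)) hxy
  have hxyR' : (x:ℝ) * (cfP α m : ℝ) + (y:ℝ) * (cfP α (m+1) : ℝ) = (s:ℝ) := by
    exact_mod_cast congrArg (fun z : ℤ => (z : ℝ)) hxy'
  have hkey : (r:ℝ) * α - s = (-1:ℝ)^m * ((x:ℝ) * cfB α m - (y:ℝ) * cfB α (m+1)) := by
    linear_combination (x:ℝ) * hq0 + (y:ℝ) * hq1 - α * hxyR + hxyR'
  rw [hkey, abs_mul, abs_pow, abs_neg, abs_one, one_pow, one_mul]
  have hB0 := cfB_pos hα hirr m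
  have hB1pos := cfB_pos hα hirr (m+1)
  have hB1lt := cfB_lt hα hirr m
  have hq0p := cfQ_ge_one hα hirr m
  have hq1p := cfQ_ge_one hα hirr (m+1)
  have hrlt := abs_lt.1 hr
  rcases lt_trichotomy y 0 with hy | hy | hy
  · rcases lt_trichotomy x 0 with hx | hx | hx
    · -- x<0, y<0 : impossible
      exfalso; nlinarith [hrlt.1, hxy, hx, hy]
    · -- x=0 : r = y q1, y<0 impossible
      exfalso
      rw [hx] at hxy
      nlinarith [hrlt.1, hxy]
    · -- x>0, y<0 : value ≥ B0 + B1
      have hx1 : (1:ℝ) ≤ (x:ℝ) := by exact_mod_cast hx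
      have hy1 : (y:ℝ) ≤ -1 := by exact_mod_cast (by omega : y ≤ -1)
      have := le_abs_self ((x:ℝ) * cfB α m - (y:ℝ) * cfB α (m+1))
      nlinarith
  · -- y = 0 : |x| ≥ 1
    have hx0 : x ≠ 0 := by
      intro h; rw [h, hy] at hxy; simp at hxy; exact hr0 hxy.symm
    have hx1 : (1:ℝ) ≤ |(x:ℝ)| := by
      have := Int.one_le_abs hx0
      calc (1:ℝ) ≤ (|x| : ℤ) := by exact_mod_cast this
        _ = |(x:ℝ)| := by push_cast; ring
    rw [hy]
    push_cast
    rw [zero_mul, sub_zero, abs_mul, abs_of_pos hB0]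
    nlinarith
  · rcases lt_trichotomy x 0 with hx | hx | hx
    · -- x<0, y>0 : value ≤ -(B0+B1)
      have hx1 : (x:ℝ) ≤ -1 := by exact_mod_cast (by omega : x ≤ -1)
      have hy1 : (1:ℝ) ≤ (y:ℝ) := by exact_mod_cast hy
      have := neg_le_abs ((x:ℝ) * cfB α m - (y:ℝ) * cfB α (m+1))
      nlinarith
    · -- x=0, y>0 : impossible
      exfalso
      rw [hx] at hxy
      nlinarith [hrlt.2, hxy]
    · -- x>0, y>0 : impossible
      exfalso; nlinarith [hrlt.2, hxy, hx, hy]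

lemma fract_lower (m : ℕ) (r : ℤ) (hr0 : r ≠ 0) (hr : |r| < cfQ α (m+1)) :
    cfB α m ≤ Int.fract ((r:ℝ) * α) := by
  have h := best_approx hα hirr m r ⌊(r:ℝ)*α⌋ hr0 hr
  rw [Int.self_sub_floor, abs_of_nonneg (Int.fract_nonneg _)] at h
  exact h

lemma fract_upper (m : ℕ) (r : ℤ) (hr0 : r ≠ 0) (hr : |r| < cfQ α (m+1)) :
    Int.fract ((r:ℝ) * α) ≤ 1 - cfB α m := by
  have h := best_approx hα hirr m r (⌊(r:ℝ)*α⌋ + 1) hr0 hr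
  have h2 : (r:ℝ) * α - ((⌊(r:ℝ)*α⌋ : ℤ) + 1 : ℤ) = Int.fract ((r:ℝ)*α) - 1 := by
    rw [← Int.self_sub_floor]
    push_cast
    ring
  rw [h2, abs_of_nonpos (by linarith [Int.fract_lt_one ((r:ℝ)*α)])] at h
  linarith

lemma exclusion_small (n : ℕ) (m : ℤ) (hm0 : m ≠ 0)
    (hmN : |m| < cfQ α n + cfQ α (n+1)) :
    cfB α (n+1) ≤ Int.fract ((m:ℝ) * α) :=
  fract_lower hα hirr (n+1) m hm0 (lt_of_lt_of_le hmN (cfQ_add_le hα hirr n))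

lemma exclusion_b {n : ℕ} (hn : 1 ≤ n) (m : ℤ) (hm0 : m ≠ 0)
    (hmN : |m| < cfQ α n + cfQ α (n+1))
    (hf1 : 0 < Int.fract ((m:ℝ) * α)) (hf2 : Int.fract ((m:ℝ) * α) < cfB α n) :
    m = -(-1)^n * cfQ α (n+1) := by
  have hBn1 := exclusion_small hα hirr n m hm0 hmN
  have hBpos := cfB_pos hα hirr n
  have hB1pos := cfB_pos hα hirr (n+1)
  have hB1lt := cfB_lt hα hirr n
  have hBhalf := cfB_lt_half hα hirr hn
  have hq0p := cfQ_ge_one hα hirr n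
  have hq1p := cfQ_ge_one hα hirr (n+1)
  have hq01 := cfQ_lt hα hirr hn
  have hQQ := cfQ_add_le hα hirr n
  have hQQ' := cfQ_add_le hα hirr (n+1)
  have hq2p := cfQ_ge_one hα hirr (n+2)
  -- |m| ≥ q_{n+1}
  have hge : cfQ α (n+1) ≤ |m| := by
    by_contra hcon
    push_neg at hcon
    exact absurd (fract_lower hα hirr n m hm0 hcon) (by linarith)
  obtain ⟨δ, hδ1, hδm⟩ : ∃ δ : ℤ, (δ = 1 ∨ δ = -1) ∧ m = δ * |m| := by
    rcases le_or_gt 0 m with h | h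
    · exact ⟨1, Or.inl rfl, by rw [one_mul, abs_of_nonneg h]⟩
    · exact ⟨-1, Or.inr rfl, by rw [abs_of_neg h]; ring⟩
  have hδδ : δ * δ = 1 := by rcases hδ1 with h | h <;> rw [h] <;> ring
  set j : ℤ := |m| - cfQ α (n+1) with hjdef
  have hj0 : 0 ≤ j := by omega
  have hjlt : j < cfQ α n := by omega
  have hq1 := qp_eq hα hirr (n+1)
  have hq0 := qp_eq hα hirr n
  have hp1 : (-1:ℝ)^(n+1) = -(-1:ℝ)^n := by rw [pow_succ]; ring
  rw [hp1] at hq1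
  have hfr : Int.fract ((m:ℝ)*α) = (m:ℝ)*α - (⌊(m:ℝ)*α⌋ : ℝ) := (Int.self_sub_floor _).symm
  have hm' : m - δ * cfQ α (n+1) = δ * j := by rw [hjdef, mul_sub, ← hδm]
  set c : ℤ := δ * (-1)^n with hcdef
  have hc1 : c = 1 ∨ c = -1 := by
    rcases hδ1 with h | h <;> rcases Nat.even_or_odd n with he | ho
    · left; rw [hcdef, h, he.neg_one_pow]; ring
    · right; rw [hcdef, h, ho.neg_one_pow]; ring
    · right; rw [hcdef, h, he.neg_one_pow]; ring
    · left; rw [hcdef, h, ho.neg_one_pow]; ring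
  have hcast : (δ:ℝ) * (-1:ℝ)^n = (c:ℝ) := by rw [hcdef]; push_cast; ring
  have hδc : δ = c * (-1)^n := by
    rw [hcdef, mul_assoc, ← pow_add]
    rw [Even.neg_one_pow ⟨n, rfl⟩, mul_one]
  -- value identity for m' = δ j
  have hcm' : ((δ * j : ℤ):ℝ) = (m:ℝ) - (δ:ℝ) * (cfQ α (n+1):ℝ) := by
    exact_mod_cast congrArg (fun z : ℤ => (z : ℝ)) hm'.symm
  have hval : ((δ * j : ℤ):ℝ) * α - ((⌊(m:ℝ)*α⌋ - δ * cfP α (n+1) : ℤ):ℝ)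
      = Int.fract ((m:ℝ)*α) + (c:ℝ) * cfB α (n+1) := by
    rw [hcm']
    push_cast
    linear_combination (-(δ:ℝ)) * hq1 - hfr + (cfB α (n+1)) * hcast
  have habsj : |δ * j| = j := by
    rcases hδ1 with h | h <;> rw [h] <;> simp [abs_of_nonneg hj0]
  rcases hc1 with hc | hc
  · -- c = 1 : contradiction
    exfalso
    have hval1 : ((δ * j : ℤ):ℝ) * α - ((⌊(m:ℝ)*α⌋ - δ * cfP α (n+1) : ℤ):ℝ)
        = Int.fract ((m:ℝ)*α) + cfB α (n+1) := by rw [hval, hc]; push_cast; ring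
    rcases eq_or_lt_of_le hj0 with hj | hj
    · -- j = 0 : integer in (0,1)
      have hj' : δ * j = 0 := by rw [← hj]; ring
      rw [hj'] at hval1
      have h01 : (0:ℝ) < -((⌊(m:ℝ)*α⌋ - δ * cfP α (n+1) : ℤ):ℝ) := by
        push_cast at hval1 ⊢; nlinarith
      have h02 : -((⌊(m:ℝ)*α⌋ - δ * cfP α (n+1) : ℤ):ℝ) < 1 := by
        push_cast at hval1 ⊢; nlinarith
      have h1' : (0:ℤ) < -(⌊(m:ℝ)*α⌋ - δ * cfP α (n+1)) := by exact_mod_cast h01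
      have h2' : -(⌊(m:ℝ)*α⌋ - δ * cfP α (n+1)) < 1 := by exact_mod_cast h02
      omega
    · -- j ≥ 1 : best approx level n, then descend
      have hne : δ * j ≠ 0 := by
        intro h; rw [h] at habsj; simp at habsj; omega
      have hb := best_approx hα hirr n (δ * j) (⌊(m:ℝ)*α⌋ - δ * cfP α (n+1)) hne
        (by rw [habsj]; omega)
      rw [hval1, abs_of_pos (by nlinarith)] at hb
      -- now B0 ≤ F + B1 and F < B0, so v - B0 ∈ [0, B1)
      have hval2 : ((δ * (j - cfQ α n) : ℤ):ℝ)
            * α - ((⌊(m:ℝ)*α⌋ - δ * cfP α (n+1) - δ * cfP α n : ℤ):ℝ)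
          = Int.fract ((m:ℝ)*α) + cfB α (n+1) - cfB α n := by
        have hcm'' : ((δ * (j - cfQ α n) : ℤ):ℝ)
            = ((δ * j : ℤ):ℝ) - (δ:ℝ) * (cfQ α n :ℝ) := by push_cast; ring
        rw [hcm'', hcm']
        push_cast
        rw [hc] at hcast
        push_cast at hcast
        linear_combination (-(δ:ℝ)) * hq1 - (δ:ℝ) * hq0 - hfr
          + (cfB α (n+1) - cfB α n) * hcast
      have hne2 : δ * (j - cfQ α n) ≠ 0 := by
        intro h
        rcases mul_eq_zero.1 h with h' | h'
        · rcases hδ1 with hh | hh <;> rw [hh] at h' <;> omega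
        · omega
      have habs2 : |δ * (j - cfQ α n)| = cfQ α n - j := by
        rcases hδ1 with h | h <;> rw [h]
        · rw [one_mul, abs_of_neg (by omega)]; ring
        · rw [neg_one_mul, abs_neg, abs_of_neg (by omega)]; ring
      have hb2 := best_approx hα hirr (n+1) (δ * (j - cfQ α n))
        (⌊(m:ℝ)*α⌋ - δ * cfP α (n+1) - δ * cfP α n) hne2
        (by show |δ * (j - cfQ α n)| < cfQ α (n+2); rw [habs2]; omega)
      rw [hval2, abs_of_nonneg (by linarith)] at hb2
      linarith
  · -- c = -1
    have hval1 : ((δ * j : ℤ):ℝ) * α - ((⌊(m:ℝ)*α⌋ - δ * cfP α (n+1) : ℤ):ℝ)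
        = Int.fract ((m:ℝ)*α) - cfB α (n+1) := by rw [hval, hc]; push_cast; ring
    rcases eq_or_lt_of_le hj0 with hj | hj
    · -- j = 0 : m = δ q_{n+1}, and δ = -(-1)^n
      have habs : |m| = cfQ α (n+1) := by omega
      rw [hδm, habs, hδc, hc]
      ring
    · -- j ≥ 1 : contradiction via best approx level n
      exfalso
      have hne : δ * j ≠ 0 := by
        intro h; rw [h] at habsj; simp at habsj; omega
      have hb := best_approx hα hirr n (δ * j) (⌊(m:ℝ)*α⌋ - δ * cfP α (n+1)) hne
        (by rw [habsj]; omega)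
      rw [hval1, abs_of_nonneg (by linarith)] at hb
      linarith

end arith


open MeasureTheory Set

namespace ThreeGapAux

noncomputable def arc (y L : ℝ) : Set (AddCircle (1:ℝ)) :=
  (fun r : ℝ => (r : AddCircle (1:ℝ))) '' Set.Ioo y (y + L)

lemma coe_eq_coe {u v : ℝ} :
    ((u : ℝ) : AddCircle (1:ℝ)) = (v : AddCircle (1:ℝ)) ↔ ∃ z : ℤ, u - v = (z : ℝ) := by
  rw [show ((u : ℝ) : AddCircle (1:ℝ)) = QuotientAddGroup.mk u from rfl,
    show ((v : ℝ) : AddCircle (1:ℝ)) = QuotientAddGroup.mk v from rfl,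
    QuotientAddGroup.eq_iff_sub_mem]
  constructor
  · intro h
    obtain ⟨k, hk⟩ := AddSubgroup.mem_zmultiples_iff.1 h
    exact ⟨k, by simpa using hk.symm⟩
  · rintro ⟨z, hz⟩
    exact AddSubgroup.mem_zmultiples_iff.2 ⟨z, by simpa using hz.symm⟩

lemma mem_arc {y L : ℝ} {z : AddCircle (1:ℝ)} :
    z ∈ arc y L ↔ ∃ u, u ∈ Set.Ioo y (y + L) ∧ ((u : ℝ) : AddCircle (1:ℝ)) = z := by
  simp [arc]

lemma arc_isOpen (y L : ℝ) : IsOpen (arc y L) :=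
  QuotientAddGroup.isOpenMap_coe _ isOpen_Ioo

lemma arc_preconnected (y L : ℝ) : IsPreconnected (arc y L) :=
  (isPreconnected_Ioo).image _ (AddCircle.continuous_mk' (1:ℝ)).continuousOn

lemma arc_nonempty {y L : ℝ} (h : 0 < L) : (arc y L).Nonempty :=
  (Set.nonempty_Ioo.2 (by linarith)).image _

lemma coe_add_int (u : ℝ) (z : ℤ) :
    (((u + (z:ℝ)) : ℝ) : AddCircle (1:ℝ)) = ((u : ℝ) : AddCircle (1:ℝ)) :=
  coe_eq_coe.2 ⟨z, by ring⟩

lemma volume_arc {y L : ℝ} (h0 : 0 ≤ L) (h1 : L ≤ 1) :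
    volume (arc y L) = ENNReal.ofReal L := by
  have hmeas : MeasurableSet (arc y L) := (arc_isOpen y L).measurableSet
  rw [AddCircle.add_projection_respects_measure (1:ℝ) y hmeas]
  have hpre : QuotientAddGroup.mk ⁻¹' (arc y L) ∩ Set.Ioc y (y + 1) = Set.Ioo y (y + L) := by
    ext u
    constructor
    · rintro ⟨hu, hu1, hu2⟩
      obtain ⟨v, hv, hvu⟩ := hu
      obtain ⟨z, hz⟩ := coe_eq_coe.1 hvu
      have hz1 : -(1:ℝ) < (z:ℝ) := by
        have := hv.1; have := hv.2
        simp only [Set.mem_Ioc] at *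
        nlinarith
      have hz2 : (z:ℝ) < 1 := by
        have := hv.1; have := hv.2
        simp only [Set.mem_Ioc] at *
        nlinarith
      have hz0 : z = 0 := by
        have a1 : (-1:ℤ) < z := by exact_mod_cast hz1
        have a2 : z < 1 := by exact_mod_cast hz2
        omega
      rw [hz0] at hz
      simp only [Int.cast_zero] at hz
      have : v = u := by linarith
      rwa [← this]
    · intro hu
      refine ⟨⟨u, hu, rfl⟩, hu.1, by linarith [hu.2]⟩
  rw [hpre, Real.volume_Ioo]
  congr 1
  ring

/-- The structure of gaps: connected components of the complement are exactly the open arcs. -/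
theorem main_geom (N : ℕ) (y : ℕ → ℝ) (d : ℕ → ℝ) (σ : ℕ → ℕ)
    (S : Set (AddCircle (1:ℝ)))
    (hS : S = {z | ∃ k, k < N ∧ z = ((y k : ℝ) : AddCircle (1:ℝ))})
    (hinj : ∀ j, j < N → ∀ k, k < N →
      ((y j : ℝ) : AddCircle (1:ℝ)) = ((y k : ℝ) : AddCircle (1:ℝ)) → j = k)
    (hd0 : ∀ k, k < N → 0 < d k) (hd1 : ∀ k, k < N → d k < 1)
    (hσ : ∀ k, k < N → σ k < N)
    (hstep : ∀ k, k < N →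
      ((y (σ k) : ℝ) : AddCircle (1:ℝ)) = ((y k + d k : ℝ) : AddCircle (1:ℝ)))
    (hsum : ∑ k ∈ Finset.range N, d k = 1)
    (hexcl : ∀ k, k < N → ∀ j, j < N → ((y j : ℝ) : AddCircle (1:ℝ)) ∉ arc (y k) (d k)) :
    {G | ∃ z ∉ S, G = connectedComponentIn Sᶜ z}
      = (fun k => arc (y k) (d k)) '' {k | k < N} ∧
    Set.InjOn (fun k => arc (y k) (d k)) {k | k < N} := by
  -- arcs avoid S
  have harcS : ∀ k, k < N → arc (y k) (d k) ⊆ Sᶜ := by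
    intro k hk z hz hzS
    rw [hS] at hzS
    obtain ⟨j, hj, rfl⟩ := hzS
    exact hexcl k hk j hj hz
  -- disjointness
  have hdisj : ∀ j, j < N → ∀ k, k < N → j ≠ k →
      arc (y j) (d j) ∩ arc (y k) (d k) = ∅ := by
    intro j hj k hk hjk
    by_contra hne
    obtain ⟨z, hzj, hzk⟩ := Set.nonempty_iff_ne_empty.2 hne
    obtain ⟨u, hu, huz⟩ := mem_arc.1 hzj
    obtain ⟨v, hv, hvz⟩ := mem_arc.1 hzk
    obtain ⟨w, hw⟩ := coe_eq_coe.1 (huz.trans hvz.symm)  -- u - v = w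
    rcases lt_trichotomy (y j + (v - u) - y k) 0 with hlt | heq | hgt
    · -- then y k + (u - v) ∈ (y j, y j + d j)
      have hmem : y k + (u - v) ∈ Set.Ioo (y j) (y j + d j) := by
        constructor
        · linarith
        · have := hv.1; have := hu.2; nlinarith [hv.1, hu.2]
      have : ((y k : ℝ) : AddCircle (1:ℝ)) ∈ arc (y j) (d j) := by
        refine mem_arc.2 ⟨y k + (u - v), hmem, ?_⟩
        rw [hw]
        exact coe_add_int (y k) w
      exact hexcl j hj k hk this
    · -- y j + (v - u) = y k : points equal
      have : ((y j : ℝ) : AddCircle (1:ℝ)) = ((y k : ℝ) : AddCircle (1:ℝ)) := by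
        have h1 : y j - y k = (u - v) := by linarith
        exact coe_eq_coe.2 ⟨w, by rw [h1, hw]⟩
      exact hjk (hinj j hj k hk this)
    · -- y j + (v - u) ∈ (y k, y k + d k)
      have hmem : y j + (v - u) ∈ Set.Ioo (y k) (y k + d k) := by
        constructor
        · linarith
        · have := hu.1; have := hv.2; nlinarith [hu.1, hv.2]
      have : ((y j : ℝ) : AddCircle (1:ℝ)) ∈ arc (y k) (d k) := by
        refine mem_arc.2 ⟨y j + (v - u), hmem, ?_⟩
        rw [show v - u = ((-w : ℤ) : ℝ) by push_cast; linarith]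
        exact coe_add_int (y j) (-w)
      exact hexcl k hk j hj this
  -- components
  have hcomp : ∀ k, k < N → ∀ z ∈ arc (y k) (d k),
      connectedComponentIn Sᶜ z = arc (y k) (d k) := by
    intro k hk z hz
    have hzS : z ∈ Sᶜ := harcS k hk hz
    apply le_antisymm
    · -- comp ⊆ arc
      set A := arc (y k) (d k) with hA
      set B := arc (y k + d k) (1 - d k) with hB
      have hd0k := hd0 k hk
      have hd1k := hd1 k hk
      have hAB : Disjoint A B := by
        rw [Set.disjoint_iff_inter_eq_empty]
        by_contra hne
        obtain ⟨w', hwA, hwB⟩ := Set.nonempty_iff_ne_empty.2 hne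
        obtain ⟨u, hu, huz⟩ := mem_arc.1 hwA
        obtain ⟨v, hv, hvz⟩ := mem_arc.1 hwB
        obtain ⟨zz, hzz⟩ := coe_eq_coe.1 (huz.trans hvz.symm)
        have h1 : -(1:ℝ) < (zz:ℝ) := by
          have a := hu.1; have b := hv.2
          nlinarith
        have h2 : (zz:ℝ) < 0 := by
          have a := hu.2; have b := hv.1
          nlinarith
        have hcon : (-1:ℤ) < zz ∧ zz < 0 := ⟨by exact_mod_cast h1, by exact_mod_cast h2⟩
        omega
      have hyk : ((y k : ℝ) : AddCircle (1:ℝ)) ∈ S := by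
        rw [hS]; exact ⟨k, hk, rfl⟩
      have hyk2 : ((y k + d k : ℝ) : AddCircle (1:ℝ)) ∈ S := by
        rw [hS]; exact ⟨σ k, hσ k hk, (hstep k hk).symm⟩
      have hcover : ∀ w : AddCircle (1:ℝ), w ∉ S → w ∈ A ∪ B := by
        intro w hwS
        have hw : w ∈ QuotientAddGroup.mk '' Set.Ioc (y k) (y k + 1) := by
          rw [AddCircle.coe_image_Ioc_eq (1:ℝ) (y k)]
          trivial
        obtain ⟨u, hu, rfl⟩ := hw
        rcases lt_trichotomy u (y k + d k) with h | h | h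
        · exact Or.inl ⟨u, ⟨hu.1, h⟩, rfl⟩
        · exact absurd (h ▸ hyk2) hwS
        · rcases eq_or_lt_of_le hu.2 with h2 | h2
          · exfalso
            apply hwS
            have : ((u : ℝ) : AddCircle (1:ℝ)) = ((y k : ℝ) : AddCircle (1:ℝ)) :=
              coe_eq_coe.2 ⟨1, by rw [h2]; push_cast; ring⟩
            rw [this]
            exact hyk
          · exact Or.inr ⟨u, ⟨h, by linarith⟩, rfl⟩
      have hCsub : connectedComponentIn Sᶜ z ⊆ A ∪ B := fun w hw =>
        hcover w (connectedComponentIn_subset Sᶜ z hw)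
      exact IsPreconnected.subset_left_of_subset_union (arc_isOpen _ _) (arc_isOpen _ _)
        hAB hCsub ⟨z, mem_connectedComponentIn hzS, hz⟩ isPreconnected_connectedComponentIn
    · exact (arc_preconnected _ _).subset_connectedComponentIn hz (harcS k hk)
  -- measure of the union of arcs is 1
  have hvol : ∀ k, k < N → volume (arc (y k) (d k)) = ENNReal.ofReal (d k) := fun k hk =>
    volume_arc (hd0 k hk).le (hd1 k hk).le
  have hUvol : volume (⋃ k ∈ Finset.range N, arc (y k) (d k)) = 1 := by
    rw [measure_biUnion_finset]
    · rw [Finset.sum_congr rfl (fun k hk => hvol k (Finset.mem_range.1 hk)),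
        ← ENNReal.ofReal_sum_of_nonneg (fun k hk => (hd0 k (Finset.mem_range.1 hk)).le), hsum,
        ENNReal.ofReal_one]
    · intro i hi j hj hij
      rw [Finset.mem_coe, Finset.mem_range] at hi hj
      exact Set.disjoint_iff_inter_eq_empty.2 (hdisj i hi j hj hij)
    · exact fun b _ => (arc_isOpen _ _).measurableSet
  -- the closed arcs cover everything
  have hV : (⋃ k ∈ Finset.range N,
      (QuotientAddGroup.mk '' Set.Icc (y k) (y k + d k) : Set (AddCircle (1:ℝ)))) = Set.univ := by
    set V := ⋃ k ∈ Finset.range N,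
      (QuotientAddGroup.mk '' Set.Icc (y k) (y k + d k) : Set (AddCircle (1:ℝ))) with hVdef
    have hVclosed : IsClosed V := by
      apply Set.Finite.isClosed_biUnion (Finset.finite_toSet _)
      intro k _
      exact (isCompact_Icc.image (AddCircle.continuous_mk' (1:ℝ))).isClosed
    have hUV : (⋃ k ∈ Finset.range N, arc (y k) (d k)) ⊆ V := by
      apply Set.iUnion₂_mono
      intro k hk
      exact Set.image_mono Set.Ioo_subset_Icc_self
    have huniv : volume (Set.univ : Set (AddCircle (1:ℝ))) = 1 := by
      rw [AddCircle.measure_univ, ENNReal.ofReal_one]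
    have hVv : volume V = 1 := by
      apply le_antisymm
      · rw [← huniv]; exact measure_mono (Set.subset_univ _)
      · rw [← hUvol]; exact measure_mono hUV
    have hcompl : volume Vᶜ = 0 := by
      rw [measure_compl hVclosed.measurableSet (by rw [hVv]; exact ENNReal.one_ne_top), hVv, huniv,
        tsub_self]
    have := hVclosed.isOpen_compl.eq_empty_of_measure_zero hcompl
    rwa [compl_empty_iff] at this
  -- every z outside S lies in some arc
  have hcov : ∀ z, z ∉ S → ∃ k, k < N ∧ z ∈ arc (y k) (d k) := by
    intro z hzS
    have hzV : z ∈ (⋃ k ∈ Finset.range N,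
        (QuotientAddGroup.mk '' Set.Icc (y k) (y k + d k) : Set (AddCircle (1:ℝ)))) := by
      rw [hV]; trivial
    simp only [Set.mem_iUnion, exists_prop] at hzV
    obtain ⟨k, hk, u, hu, rfl⟩ := hzV
    rw [Finset.mem_range] at hk
    rcases eq_or_lt_of_le hu.1 with h | h
    · exfalso; apply hzS; rw [hS]; exact ⟨k, hk, by rw [← h]⟩
    rcases eq_or_lt_of_le hu.2 with h2 | h2
    · exfalso; apply hzS; rw [hS]; exact ⟨σ k, hσ k hk, by rw [h2]; exact (hstep k hk).symm⟩
    · exact ⟨k, hk, ⟨u, ⟨h, h2⟩, rfl⟩⟩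
  constructor
  · ext G
    constructor
    · rintro ⟨z, hzS', rfl⟩
      obtain ⟨k, hk, hzk⟩ := hcov z hzS'
      exact ⟨k, hk, (hcomp k hk z hzk).symm⟩
    · rintro ⟨k, hk, rfl⟩
      obtain ⟨z, hz⟩ := arc_nonempty (hd0 k hk)
      exact ⟨z, fun hzS => (harcS k hk hz) hzS, (hcomp k hk z hz).symm⟩
  · intro j hj k hk hjk
    by_contra hne
    obtain ⟨z, hz⟩ := arc_nonempty (hd0 j hj)
    have hjk' : arc (y j) (d j) = arc (y k) (d k) := hjk
    have hmem : z ∈ arc (y j) (d j) ∩ arc (y k) (d k) := ⟨hz, hjk' ▸ hz⟩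
    rw [hdisj j hj k hk hne] at hmem
    exact hmem

end ThreeGapAux


namespace ThreeGapAux

open MeasureTheory Set

lemma sum_split (N b : ℕ) (hb : b ≤ N) (X Y : ℝ) :
    ∑ k ∈ Finset.range N, (if k < b then X else Y) = b * X + ((N - b : ℕ) : ℝ) * Y := by
  rw [Finset.range_eq_Ico, ← Finset.sum_Ico_consecutive _ (Nat.zero_le b) hb]
  have h1 : ∑ k ∈ Finset.Ico 0 b, (if k < b then X else Y) = b * X := by
    rw [Finset.sum_congr rfl (fun k hk => if_pos (Finset.mem_Ico.1 hk).2)]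
    simp [Finset.sum_const, Nat.card_Ico, mul_comm]
  have h2 : ∑ k ∈ Finset.Ico b N, (if k < b then X else Y) = ((N - b : ℕ) : ℝ) * Y := by
    rw [Finset.sum_congr rfl (fun k hk => if_neg (by
      have := (Finset.mem_Ico.1 hk).1; omega))]
    simp [Finset.sum_const, Nat.card_Ico, mul_comm]
  rw [h1, h2]

/-- From the conclusion of `main_geom`, derive the three goals. -/
lemma assemble {α : ℝ} (hα : α ∈ Set.Ioo (0 : ℝ) 1) (hirr : Irrational α)
    {n : ℕ} (hn : 1 ≤ n) (N : ℕ) (d : ℕ → ℝ)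
    (S : Set (AddCircle (1 : ℝ))) (gaps : Set (Set (AddCircle (1 : ℝ))))
    (hgaps : gaps = {G | ∃ z ∉ S, G = connectedComponentIn Sᶜ z})
    (hmain : {G | ∃ z ∉ S, G = connectedComponentIn Sᶜ z}
        = (fun k : ℕ => arc ((k : ℝ) * α) (d k)) '' {k | k < N} ∧
      Set.InjOn (fun k : ℕ => arc ((k : ℝ) * α) (d k)) {k | k < N})
    (hd : ∀ k, k < N → d k = cfB α n ∨ d k = cfB α (n + 1))
    (hcard1 : {k | k < N ∧ d k = cfB α (n + 1)}.ncard = (cfQ α n).toNat)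
    (hcard0 : {k | k < N ∧ d k = cfB α n}.ncard = (cfQ α (n + 1)).toNat) :
    (∀ G ∈ gaps,
        volume G = ENNReal.ofReal (distNearestInt ((cfQ α (n + 1) : ℝ) * α)) ∨
        volume G = ENNReal.ofReal (distNearestInt ((cfQ α n : ℝ) * α))) ∧
    {G ∈ gaps | volume G =
        ENNReal.ofReal (distNearestInt ((cfQ α (n + 1) : ℝ) * α))}.ncard
      = (cfQ α n).toNat ∧
    {G ∈ gaps | volume G =
        ENNReal.ofReal (distNearestInt ((cfQ α n : ℝ) * α))}.ncard
      = (cfQ α (n + 1)).toNat := by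
  have hBpos := cfB_pos hα hirr n
  have hB1pos := cfB_pos hα hirr (n + 1)
  have hB1lt := cfB_lt hα hirr n
  have hBlt1 : cfB α n < 1 := cfB_lt_one hα hirr n
  have hdist0 : distNearestInt ((cfQ α n : ℝ) * α) = cfB α n := dist_eq_cfB hα hirr hn
  have hdist1 : distNearestInt ((cfQ α (n + 1) : ℝ) * α) = cfB α (n + 1) :=
    dist_eq_cfB hα hirr (by omega)
  rw [hgaps, hmain.1, hdist0, hdist1]
  have hd0 : ∀ k, k < N → 0 < d k := by
    intro k hk; rcases hd k hk with h | h <;> rw [h]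
    · exact hBpos
    · exact hB1pos
  have hd1 : ∀ k, k < N → d k < 1 := by
    intro k hk; rcases hd k hk with h | h <;> rw [h]
    · exact hBlt1
    · linarith
  have hvol : ∀ k, k < N → volume (arc ((k : ℝ) * α) (d k)) = ENNReal.ofReal (d k) :=
    fun k hk => volume_arc (hd0 k hk).le (hd1 k hk).le
  refine ⟨?_, ?_, ?_⟩
  · rintro G ⟨k, hk, rfl⟩
    rcases hd k hk with h | h
    · right; rw [hvol k hk, h]
    · left; rw [hvol k hk, h]
  · have hset : {G ∈ (fun k : ℕ => arc ((k : ℝ) * α) (d k)) '' {k | k < N} |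
        volume G = ENNReal.ofReal (cfB α (n + 1))}
        = (fun k : ℕ => arc ((k : ℝ) * α) (d k)) '' {k | k < N ∧ d k = cfB α (n + 1)} := by
      ext G
      constructor
      · rintro ⟨⟨k, hk, rfl⟩, hvolG⟩
        refine ⟨k, ⟨hk, ?_⟩, rfl⟩
        rw [hvol k hk] at hvolG
        exact (ENNReal.ofReal_eq_ofReal_iff (hd0 k hk).le hB1pos.le).1 hvolG
      · rintro ⟨k, ⟨hk, hdk⟩, rfl⟩
        exact ⟨⟨k, hk, rfl⟩, by rw [hvol k hk, hdk]⟩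
    rw [hset, Set.ncard_image_of_injOn (hmain.2.mono (fun k hk => hk.1)), hcard1]
  · have hset : {G ∈ (fun k : ℕ => arc ((k : ℝ) * α) (d k)) '' {k | k < N} |
        volume G = ENNReal.ofReal (cfB α n)}
        = (fun k : ℕ => arc ((k : ℝ) * α) (d k)) '' {k | k < N ∧ d k = cfB α n} := by
      ext G
      constructor
      · rintro ⟨⟨k, hk, rfl⟩, hvolG⟩
        refine ⟨k, ⟨hk, ?_⟩, rfl⟩
        rw [hvol k hk] at hvolG
        exact (ENNReal.ofReal_eq_ofReal_iff (hd0 k hk).le hBpos.le).1 hvolG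
      · rintro ⟨k, ⟨hk, hdk⟩, rfl⟩
        exact ⟨⟨k, hk, rfl⟩, by rw [hvol k hk, hdk]⟩
    rw [hset, Set.ncard_image_of_injOn (hmain.2.mono (fun k hk => hk.1)), hcard0]

end ThreeGapAux

open MeasureTheory ThreeGapAux
open scoped ENNReal


open ThreeGapAux


/-- **Three-gap structure for irrational rotation.** Let `α ∈ (0,1)` be irrational with
convergent denominators `q_n` and put `K = q_n + q_{n+1} - 1`. Then the points
`{kα mod 1 : k = 0,…,K}` partition the circle `ℝ/ℤ` into exactly `q_n` gaps of length
`‖q_{n+1}α‖` and `q_{n+1}` gaps of length `‖q_n α‖` (a gap is a connected component of the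
complement of the point set, and length is its Haar measure). -/
theorem three_gap_structure (α : ℝ) (hα : α ∈ Set.Ioo (0 : ℝ) 1) (hirr : Irrational α)
    (n : ℕ) (hn : 1 ≤ n) :
    ∀ S : Set (AddCircle (1 : ℝ)),
      S = {z | ∃ k : ℕ, (k : ℤ) ≤ cfQ α n + cfQ α (n + 1) - 1 ∧
            z = (((k : ℝ) * α : ℝ) : AddCircle (1 : ℝ))} →
      ∀ gaps : Set (Set (AddCircle (1 : ℝ))),
        gaps = {G | ∃ z ∉ S, G = connectedComponentIn Sᶜ z} →
          (∀ G ∈ gaps,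
              volume G = ENNReal.ofReal (distNearestInt ((cfQ α (n + 1) : ℝ) * α)) ∨
              volume G = ENNReal.ofReal (distNearestInt ((cfQ α n : ℝ) * α))) ∧
          {G ∈ gaps | volume G =
              ENNReal.ofReal (distNearestInt ((cfQ α (n + 1) : ℝ) * α))}.ncard
            = (cfQ α n).toNat ∧
          {G ∈ gaps | volume G =
              ENNReal.ofReal (distNearestInt ((cfQ α n : ℝ) * α))}.ncard
            = (cfQ α (n + 1)).toNat := by
  intro S hS gaps hgaps
  have hq0p := cfQ_ge_one hα hirr n
  have hq1p := cfQ_ge_one hα hirr (n + 1)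
  have hBpos := cfB_pos hα hirr n
  have hB1pos := cfB_pos hα hirr (n + 1)
  have hB1lt := cfB_lt hα hirr n
  have hBlt1 := cfB_lt_one hα hirr n
  have hBhalf := cfB_lt_half hα hirr hn
  set a : ℕ := (cfQ α n).toNat with hadef
  set b : ℕ := (cfQ α (n + 1)).toNat with hbdef
  have hacast : (a : ℤ) = cfQ α n := Int.toNat_of_nonneg (by omega)
  have hbcast : (b : ℤ) = cfQ α (n + 1) := Int.toNat_of_nonneg (by omega)
  have haR : (a : ℝ) = ((cfQ α n : ℤ) : ℝ) := by exact_mod_cast congrArg (fun z : ℤ => (z : ℝ)) hacast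
  have hbR : (b : ℝ) = ((cfQ α (n + 1) : ℤ) : ℝ) := by
    exact_mod_cast congrArg (fun z : ℤ => (z : ℝ)) hbcast
  set N : ℕ := a + b with hNdef
  have ha1 : 1 ≤ a := by omega
  have hb1 : 1 ≤ b := by omega
  have hqa : (cfQ α n : ℝ) * α = (cfP α n : ℝ) + (-1 : ℝ) ^ n * cfB α n := by
    linarith [qp_eq hα hirr n]
  have hqb : (cfQ α (n + 1) : ℝ) * α
      = (cfP α (n + 1) : ℝ) - (-1 : ℝ) ^ n * cfB α (n + 1) := by
    have h := qp_eq hα hirr (n + 1)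
    rw [pow_succ] at h
    linarith
  have hSeq : S = {z | ∃ k, k < N ∧ z = (((k : ℝ) * α : ℝ) : AddCircle (1 : ℝ))} := by
    rw [hS]; ext z
    simp only [Set.mem_setOf_eq]
    constructor
    · rintro ⟨k, hk, rfl⟩
      exact ⟨k, by omega, rfl⟩
    · rintro ⟨k, hk, rfl⟩
      exact ⟨k, by omega, rfl⟩
  have hinj : ∀ j, j < N → ∀ k, k < N →
      (((j : ℝ) * α : ℝ) : AddCircle (1 : ℝ)) = (((k : ℝ) * α : ℝ) : AddCircle (1 : ℝ)) →
      j = k := by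
    intro j _ k _ h
    by_contra hne
    obtain ⟨z, hz⟩ := coe_eq_coe.1 h
    have hm : ((j : ℤ) - k) ≠ 0 := by omega
    refine (hirr.intCast_mul hm).ne_int z ?_
    push_cast
    linarith
  have hfract : ∀ k, k < N → ∀ j, j < N → ∀ L : ℝ, 0 < L → L < 1 →
      (((j : ℝ) * α : ℝ) : AddCircle (1 : ℝ)) ∈ arc ((k : ℝ) * α) L →
      ((j : ℤ) - k ≠ 0 ∧ |(j : ℤ) - k| < cfQ α n + cfQ α (n + 1) ∧
       0 < Int.fract ((((j : ℤ) - k : ℤ) : ℝ) * α) ∧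
       Int.fract ((((j : ℤ) - k : ℤ) : ℝ) * α) < L) := by
    intro k hk j hj L hL0 hL1 hmem
    obtain ⟨u, hu, huz⟩ := mem_arc.1 hmem
    obtain ⟨w, hw⟩ := coe_eq_coe.1 huz
    have ht0 : 0 < u - (k : ℝ) * α := by linarith [hu.1]
    have ht1 : u - (k : ℝ) * α < L := by linarith [hu.2]
    have hfr : Int.fract ((((j : ℤ) - k : ℤ) : ℝ) * α) = u - (k : ℝ) * α := by
      have hrw : (((j : ℤ) - k : ℤ) : ℝ) * α = (u - (k : ℝ) * α) + ((-w : ℤ) : ℝ) := by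
        push_cast
        linarith
      rw [hrw, Int.fract_add_intCast, Int.fract_eq_self.2 ⟨ht0.le, by linarith⟩]
    have hm0 : (j : ℤ) - k ≠ 0 := by
      intro h0
      rw [h0] at hfr
      simp at hfr
      linarith
    have habs : |(j : ℤ) - (k : ℤ)| < cfQ α n + cfQ α (n + 1) := by
      rw [abs_lt]
      omega
    exact ⟨hm0, habs, by rw [hfr]; exact ht0, by rw [hfr]; exact ht1⟩
  rcases Nat.even_or_odd n with hev | hod
  · -- even case
    have hE : (-1 : ℝ) ^ n = 1 := hev.neg_one_pow
    have hEz : (-1 : ℤ) ^ n = 1 := hev.neg_one_pow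
    have haα : (a : ℝ) * α = (cfP α n : ℝ) + cfB α n := by rw [haR, hqa, hE]; ring
    have hbα : (b : ℝ) * α = (cfP α (n + 1) : ℝ) - cfB α (n + 1) := by rw [hbR, hqb, hE]; ring
    set d : ℕ → ℝ := fun k => if k < b then cfB α n else cfB α (n + 1) with hddef
    set σf : ℕ → ℕ := fun k => if k < b then k + a else k - b with hσdef
    have hdeval : ∀ k, d k = if k < b then cfB α n else cfB α (n + 1) := fun _ => rfl
    have hσeval : ∀ k, σf k = if k < b then k + a else k - b := fun _ => rfl
    have hd0 : ∀ k, k < N → 0 < d k := by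
      intro k _
      rw [hdeval]
      split
      · exact hBpos
      · exact hB1pos
    have hd1' : ∀ k, k < N → d k < 1 := by
      intro k _
      rw [hdeval]
      split <;> linarith
    have hσ : ∀ k, k < N → σf k < N := by
      intro k hk
      rw [hσeval]
      split <;> omega
    have hstep : ∀ k, k < N → (((σf k : ℝ) * α : ℝ) : AddCircle (1 : ℝ))
        = ((((k : ℝ) * α + d k) : ℝ) : AddCircle (1 : ℝ)) := by
      intro k hk
      by_cases hkb : k < b
      · rw [hdeval, hσeval, if_pos hkb, if_pos hkb]
        refine coe_eq_coe.2 ⟨cfP α n, ?_⟩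
        push_cast
        linarith
      · rw [hdeval, hσeval, if_neg hkb, if_neg hkb]
        refine coe_eq_coe.2 ⟨-cfP α (n + 1), ?_⟩
        have hc : ((k - b : ℕ) : ℝ) = (k : ℝ) - b := by
          push_cast [Nat.cast_sub (by omega : b ≤ k)]
          ring
        rw [hc]
        push_cast
        linarith
    have hsum : ∑ k ∈ Finset.range N, d k = 1 := by
      have hsp := sum_split N b (by omega) (cfB α n) (cfB α (n + 1))
      have hNb : ((N - b : ℕ) : ℝ) = (a : ℝ) := by
        norm_cast
        omega
      calc ∑ k ∈ Finset.range N, d k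
          = ∑ k ∈ Finset.range N, (if k < b then cfB α n else cfB α (n + 1)) := rfl
        _ = (b : ℝ) * cfB α n + ((N - b : ℕ) : ℝ) * cfB α (n + 1) := hsp
        _ = ((cfQ α (n + 1) : ℤ) : ℝ) * cfB α n + ((cfQ α n : ℤ) : ℝ) * cfB α (n + 1) := by
            rw [hNb, haR, hbR]
        _ = 1 := sum_identity hα hirr n
    have hexcl : ∀ k, k < N → ∀ j, j < N →
        (((j : ℝ) * α : ℝ) : AddCircle (1 : ℝ)) ∉ arc ((k : ℝ) * α) (d k) := by
      intro k hk j hj hmem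
      obtain ⟨hm0, habs, hf0, hfL⟩ := hfract k hk j hj (d k) (hd0 k hk) (hd1' k hk) hmem
      by_cases hkb : k < b
      · rw [hdeval, if_pos hkb] at hfL
        have hcon := exclusion_b hα hirr hn ((j : ℤ) - k) hm0 habs hf0 hfL
        rw [hEz] at hcon
        omega
      · rw [hdeval, if_neg hkb] at hfL
        exact absurd (exclusion_small hα hirr n ((j : ℤ) - k) hm0 habs) (by linarith)
    have hmain := main_geom N (fun k => (k : ℝ) * α) d σf S hSeq hinj hd0 hd1' hσ hstep hsum hexcl
    have hidx1 : {k | k < N ∧ d k = cfB α (n + 1)} = ↑(Finset.Ico b N) := by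
      ext k
      simp only [Set.mem_setOf_eq, Finset.coe_Ico, Set.mem_Ico]
      constructor
      · rintro ⟨hk, hdk⟩
        refine ⟨?_, hk⟩
        by_contra hc
        push_neg at hc
        rw [hdeval, if_pos hc] at hdk
        linarith
      · rintro ⟨hbk, hk⟩
        exact ⟨hk, by rw [hdeval, if_neg (by omega)]⟩
    have hidx0 : {k | k < N ∧ d k = cfB α n} = ↑(Finset.range b) := by
      ext k
      simp only [Set.mem_setOf_eq, Finset.coe_range, Set.mem_Iio]
      constructor
      · rintro ⟨hk, hdk⟩
        by_contra hc
        push_neg at hc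
        rw [hdeval, if_neg (by omega)] at hdk
        linarith
      · intro hkb
        exact ⟨by omega, by rw [hdeval, if_pos hkb]⟩
    refine assemble hα hirr hn N d S gaps hgaps hmain ?_ ?_ ?_
    · intro k _
      rw [hdeval]
      split
      · left; rfl
      · right; rfl
    · rw [hidx1, Set.ncard_coe_finset, Nat.card_Ico]
      omega
    · rw [hidx0, Set.ncard_coe_finset, Finset.card_range]
  · -- odd case
    have hE : (-1 : ℝ) ^ n = -1 := hod.neg_one_pow
    have hEz : (-1 : ℤ) ^ n = -1 := hod.neg_one_pow
    have haα : (a : ℝ) * α = (cfP α n : ℝ) - cfB α n := by rw [haR, hqa, hE]; ring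
    have hbα : (b : ℝ) * α = (cfP α (n + 1) : ℝ) + cfB α (n + 1) := by rw [hbR, hqb, hE]; ring
    set d : ℕ → ℝ := fun k => if k < a then cfB α (n + 1) else cfB α n with hddef
    set σf : ℕ → ℕ := fun k => if k < a then k + b else k - a with hσdef
    have hdeval : ∀ k, d k = if k < a then cfB α (n + 1) else cfB α n := fun _ => rfl
    have hσeval : ∀ k, σf k = if k < a then k + b else k - a := fun _ => rfl
    have hd0 : ∀ k, k < N → 0 < d k := by
      intro k _
      rw [hdeval]
      split
      · exact hB1pos
      · exact hBpos
    have hd1' : ∀ k, k < N → d k < 1 := by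
      intro k _
      rw [hdeval]
      split <;> linarith
    have hσ : ∀ k, k < N → σf k < N := by
      intro k hk
      rw [hσeval]
      split <;> omega
    have hstep : ∀ k, k < N → (((σf k : ℝ) * α : ℝ) : AddCircle (1 : ℝ))
        = ((((k : ℝ) * α + d k) : ℝ) : AddCircle (1 : ℝ)) := by
      intro k hk
      by_cases hka : k < a
      · rw [hdeval, hσeval, if_pos hka, if_pos hka]
        refine coe_eq_coe.2 ⟨cfP α (n + 1), ?_⟩
        push_cast
        linarith
      · rw [hdeval, hσeval, if_neg hka, if_neg hka]
        refine coe_eq_coe.2 ⟨-cfP α n, ?_⟩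
        have hc : ((k - a : ℕ) : ℝ) = (k : ℝ) - a := by
          push_cast [Nat.cast_sub (by omega : a ≤ k)]
          ring
        rw [hc]
        push_cast
        linarith
    have hsum : ∑ k ∈ Finset.range N, d k = 1 := by
      have hsp := sum_split N a (by omega) (cfB α (n + 1)) (cfB α n)
      have hNa : ((N - a : ℕ) : ℝ) = (b : ℝ) := by
        norm_cast
        omega
      calc ∑ k ∈ Finset.range N, d k
          = ∑ k ∈ Finset.range N, (if k < a then cfB α (n + 1) else cfB α n) := rfl
        _ = (a : ℝ) * cfB α (n + 1) + ((N - a : ℕ) : ℝ) * cfB α n := hsp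
        _ = ((cfQ α (n + 1) : ℤ) : ℝ) * cfB α n + ((cfQ α n : ℤ) : ℝ) * cfB α (n + 1) := by
            rw [hNa, haR, hbR]; ring
        _ = 1 := sum_identity hα hirr n
    have hexcl : ∀ k, k < N → ∀ j, j < N →
        (((j : ℝ) * α : ℝ) : AddCircle (1 : ℝ)) ∉ arc ((k : ℝ) * α) (d k) := by
      intro k hk j hj hmem
      obtain ⟨hm0, habs, hf0, hfL⟩ := hfract k hk j hj (d k) (hd0 k hk) (hd1' k hk) hmem
      by_cases hka : k < a
      · rw [hdeval, if_pos hka] at hfL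
        exact absurd (exclusion_small hα hirr n ((j : ℤ) - k) hm0 habs) (by linarith)
      · rw [hdeval, if_neg hka] at hfL
        have hcon := exclusion_b hα hirr hn ((j : ℤ) - k) hm0 habs hf0 hfL
        rw [hEz] at hcon
        omega
    have hmain := main_geom N (fun k => (k : ℝ) * α) d σf S hSeq hinj hd0 hd1' hσ hstep hsum hexcl
    have hidx1 : {k | k < N ∧ d k = cfB α (n + 1)} = ↑(Finset.range a) := by
      ext k
      simp only [Set.mem_setOf_eq, Finset.coe_range, Set.mem_Iio]
      constructor
      · rintro ⟨hk, hdk⟩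
        by_contra hc
        push_neg at hc
        rw [hdeval, if_neg (by omega)] at hdk
        linarith
      · intro hka
        exact ⟨by omega, by rw [hdeval, if_pos hka]⟩
    have hidx0 : {k | k < N ∧ d k = cfB α n} = ↑(Finset.Ico a N) := by
      ext k
      simp only [Set.mem_setOf_eq, Finset.coe_Ico, Set.mem_Ico]
      constructor
      · rintro ⟨hk, hdk⟩
        refine ⟨?_, hk⟩
        by_contra hc
        push_neg at hc
        rw [hdeval, if_pos hc] at hdk
        linarith
      · rintro ⟨hak, hk⟩
        exact ⟨hk, by rw [hdeval, if_neg (by omega)]⟩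
    refine assemble hα hirr hn N d S gaps hgaps hmain ?_ ?_ ?_
    · intro k _
      rw [hdeval]
      split
      · right; rfl
      · left; rfl
    · rw [hidx1, Set.ncard_coe_finset, Finset.card_range]
    · rw [hidx0, Set.ncard_coe_finset, Nat.card_Ico]
      omega
end

section
/- Let α ∈ (0,1) be irrational with continued fraction denominators q_n, and let N ≥ ⌊(q_n + q_{n+1})/2⌋. Then the maximal gap between consecutive points of the set {tα mod 1 : t = -N, …, N} on the circle ℝ/ℤ is at most ‖q_n α‖. -/
open MeasureTheory
open scoped ENNReal

noncomputable def cfPi (α : ℝ) (n : ℕ) : ℝ := ∏ k ∈ Finset.range (n+1), gaussIter α k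

variable {α : ℝ}

lemma gaussIter_zero : gaussIter α 0 = α := rfl
lemma gaussIter_succ (k : ℕ) : gaussIter α (k + 1) = Int.fract (gaussIter α k)⁻¹ := rfl
lemma cfQ_zero : cfQ α 0 = 1 := rfl
lemma cfQ_one : cfQ α 1 = cfA α 0 := rfl
lemma cfQ_two (n : ℕ) : cfQ α (n + 2) = cfA α (n + 1) * cfQ α (n + 1) + cfQ α n := rfl
lemma cfP_zero : cfP α 0 = 0 := rfl
lemma cfP_one : cfP α 1 = 1 := rfl
lemma cfP_two (n : ℕ) : cfP α (n + 2) = cfA α (n + 1) * cfP α (n + 1) + cfP α n := rfl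
lemma cfPi_zero : cfPi α 0 = α := by simp [cfPi, gaussIter_zero]

lemma gaussIter_irr (hα : α ∈ Set.Ioo (0 : ℝ) 1) (hirr : Irrational α) :
    ∀ k, Irrational (gaussIter α k) ∧ gaussIter α k ∈ Set.Ioo (0 : ℝ) 1 := by
  intro k
  induction k with
  | zero => exact ⟨hirr, hα⟩
  | succ k ih =>
    obtain ⟨h1, h2, h3⟩ := ih
    have hne : gaussIter α k ≠ 0 := ne_of_gt h2
    have hinv : Irrational (gaussIter α k)⁻¹ := h1.inv
    have : Irrational (Int.fract (gaussIter α k)⁻¹) := by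
      rw [Int.fract]
      exact hinv.sub_intCast _
    refine ⟨this, ?_, Int.fract_lt_one _⟩
    rcases lt_or_eq_of_le (Int.fract_nonneg (gaussIter α k)⁻¹) with h | h
    · exact h
    · exact absurd h.symm (fun hc => this (hc ▸ ⟨0, by simp⟩))

lemma one_le_cfA (hα : α ∈ Set.Ioo (0 : ℝ) 1) (hirr : Irrational α) (k : ℕ) :
    1 ≤ cfA α k := by
  obtain ⟨-, h0, h1⟩ := gaussIter_irr hα hirr k
  have : (1 : ℝ) ≤ (gaussIter α k)⁻¹ := by
    rw [le_inv_comm₀ one_pos h0]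
    simpa using h1.le
  exact Int.le_floor.2 (by exact_mod_cast this)

lemma one_le_cfQ (hα : α ∈ Set.Ioo (0 : ℝ) 1) (hirr : Irrational α) (n : ℕ) :
    1 ≤ cfQ α n := by
  have key : ∀ m, 1 ≤ cfQ α m ∧ 1 ≤ cfQ α (m + 1) := by
    intro m
    induction m with
    | zero => exact ⟨le_refl 1, one_le_cfA hα hirr 0⟩
    | succ m ih =>
      refine ⟨ih.2, ?_⟩
      show 1 ≤ cfA α (m + 1) * cfQ α (m + 1) + cfQ α m
      nlinarith [one_le_cfA hα hirr (m + 1), ih.1, ih.2]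
  exact (key n).1

lemma cfPi_pos (hα : α ∈ Set.Ioo (0 : ℝ) 1) (hirr : Irrational α) (n : ℕ) :
    0 < cfPi α n :=
  Finset.prod_pos fun k _ => (gaussIter_irr hα hirr k).2.1

lemma cfPi_succ (n : ℕ) : cfPi α (n + 1) = cfPi α n * gaussIter α (n + 1) :=
  Finset.prod_range_succ _ _

lemma cfPi_succ_lt (hα : α ∈ Set.Ioo (0 : ℝ) 1) (hirr : Irrational α) (n : ℕ) :
    cfPi α (n + 1) < cfPi α n := by
  rw [cfPi_succ]
  nlinarith [cfPi_pos hα hirr n, (gaussIter_irr hα hirr (n+1)).2.1,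
    (gaussIter_irr hα hirr (n+1)).2.2]

lemma cfPi_anti (hα : α ∈ Set.Ioo (0 : ℝ) 1) (hirr : Irrational α) {m n : ℕ} (h : m ≤ n) :
    cfPi α n ≤ cfPi α m := by
  induction n with
  | zero => simp [Nat.le_zero.1 h]
  | succ n ih =>
    rcases Nat.lt_succ_iff_lt_or_eq.mp (Nat.lt_succ_of_le h) with h' | h'
    · exact le_trans (cfPi_succ_lt hα hirr n).le (ih (Nat.lt_succ_iff.mp h'))
    · simp [h']

lemma cfPi_one_lt_half (hα : α ∈ Set.Ioo (0 : ℝ) 1) (hirr : Irrational α) :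
    cfPi α 1 < 1 / 2 := by
  have h0 := gaussIter_irr hα hirr 0
  have h1 := gaussIter_irr hα hirr 1
  have hβ1 : gaussIter α 1 = α⁻¹ - ⌊α⁻¹⌋ := by
    rw [gaussIter_succ, gaussIter_zero, Int.fract]
  have hne : α ≠ 1/2 := fun h => hirr ⟨1/2, by norm_num [h]⟩
  have hprod : cfPi α 1 = α * gaussIter α 1 := by
    rw [show (1:ℕ) = 0 + 1 from rfl, cfPi_succ, cfPi_zero]
  rcases lt_or_gt_of_ne hne with h | h
  · -- α < 1/2 : cfPi 1 = α * β1 < α ≤ 1/2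
    nlinarith [h1.2.1, h1.2.2, hα.1]
  · -- α > 1/2 : ⌊α⁻¹⌋ = 1, cfPi 1 = 1 - α < 1/2
    have hfl : ⌊α⁻¹⌋ = 1 := by
      have h2 : α⁻¹ < 2 := by
        rw [inv_lt_comm₀ hα.1 (by norm_num)]; linarith
      have h1' : 1 < α⁻¹ := (one_lt_inv₀ hα.1).2 hα.2
      rw [Int.floor_eq_iff]
      push_cast
      constructor <;> linarith
    rw [hprod, hβ1, hfl]
    push_cast
    have : α * α⁻¹ = 1 := mul_inv_cancel₀ (ne_of_gt hα.1)
    nlinarith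

lemma theta_eq (hα : α ∈ Set.Ioo (0 : ℝ) 1) (hirr : Irrational α) (n : ℕ) :
    (cfQ α n : ℝ) * α - cfP α n = (-1 : ℝ)^n * cfPi α n := by
  have key : ∀ m, ((cfQ α m : ℝ) * α - cfP α m = (-1 : ℝ)^m * cfPi α m) ∧
      ((cfQ α (m+1) : ℝ) * α - cfP α (m+1) = (-1 : ℝ)^(m+1) * cfPi α (m+1)) := by
    intro m
    induction m with
    | zero =>
      constructor
      · rw [cfQ_zero, cfP_zero, cfPi_zero]; push_cast; ring
      · have h0 := (gaussIter_irr hα hirr 0).2.1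
        have hβ1 : gaussIter α 1 = α⁻¹ - ⌊α⁻¹⌋ := by
          rw [gaussIter_succ, gaussIter_zero, Int.fract]
        rw [cfQ_one, cfP_one, show cfA α 0 = ⌊α⁻¹⌋ from by rw [cfA, gaussIter_zero],
          show (0:ℕ)+1 = 0+1 from rfl, cfPi_succ, cfPi_zero, hβ1]
        have : α * α⁻¹ = 1 := mul_inv_cancel₀ (ne_of_gt hα.1)
        push_cast
        ring_nf
        nlinarith [this]
    | succ m ih =>
      refine ⟨ih.2, ?_⟩
      have hrecQ : (cfQ α (m+2) : ℝ) = (cfA α (m+1) : ℝ) * cfQ α (m+1) + cfQ α m := by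
        push_cast [cfQ_two]; ring
      have hrecP : (cfP α (m+2) : ℝ) = (cfA α (m+1) : ℝ) * cfP α (m+1) + cfP α m := by
        push_cast [cfP_two]; ring
      have hβ : gaussIter α (m+2) = (gaussIter α (m+1))⁻¹ - ⌊(gaussIter α (m+1))⁻¹⌋ := by
        rw [gaussIter_succ, Int.fract]
      have hb := (gaussIter_irr hα hirr (m+1)).2.1
      have hbne : gaussIter α (m+1) ≠ 0 := ne_of_gt hb
      have hA : (cfA α (m+1) : ℝ) = (gaussIter α (m+1))⁻¹ - gaussIter α (m+2) := by
        rw [hβ, cfA]; ring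
      have h2 : cfPi α (m+2) = cfPi α (m+1) * gaussIter α (m+2) := cfPi_succ _
      have h1 : cfPi α (m+1) = cfPi α m * gaussIter α (m+1) := cfPi_succ _
      have hmul : cfPi α (m+1) * (gaussIter α (m+1))⁻¹ = cfPi α m := by
        rw [h1, mul_assoc, mul_inv_cancel₀ hbne, mul_one]
      calc (cfQ α (m+2) : ℝ) * α - cfP α (m+2)
          = (cfA α (m+1) : ℝ) * ((cfQ α (m+1) : ℝ) * α - cfP α (m+1))
            + ((cfQ α m : ℝ) * α - cfP α m) := by rw [hrecQ, hrecP]; ring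
        _ = (cfA α (m+1) : ℝ) * ((-1)^(m+1) * cfPi α (m+1)) + (-1)^m * cfPi α m := by
            rw [ih.1, ih.2]
        _ = (-1 : ℝ)^(m+2) * cfPi α (m+2) := by
            rw [hA, h2, ← hmul]; ring
  exact (key n).1

lemma cfPi_lt_half (hα : α ∈ Set.Ioo (0 : ℝ) 1) (hirr : Irrational α) {n : ℕ} (hn : 1 ≤ n) :
    cfPi α n < 1 / 2 :=
  lt_of_le_of_lt (cfPi_anti hα hirr hn) (cfPi_one_lt_half hα hirr)

lemma distNearestInt_q (hα : α ∈ Set.Ioo (0 : ℝ) 1) (hirr : Irrational α) {n : ℕ}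
    (hn : 1 ≤ n) : distNearestInt ((cfQ α n : ℝ) * α) = cfPi α n := by
  have hθ := theta_eq hα hirr n
  have hpos := cfPi_pos hα hirr n
  have hhalf := cfPi_lt_half hα hirr hn
  have habs : |(-1 : ℝ)^n * cfPi α n| = cfPi α n := by
    rw [abs_mul, abs_pow, abs_neg, abs_one, one_pow, one_mul, abs_of_pos hpos]
  have hval : (cfQ α n : ℝ) * α = cfP α n + (-1 : ℝ)^n * cfPi α n := by linarith
  have hround : round ((cfQ α n : ℝ) * α) = cfP α n := by
    rw [hval, round_intCast_add]
    have : round ((-1 : ℝ)^n * cfPi α n) = 0 := by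
      rw [round_eq_zero_iff]
      constructor
      · rcases neg_abs_le ((-1 : ℝ)^n * cfPi α n) with h
        rw [habs] at h; linarith
      · rcases le_abs_self ((-1 : ℝ)^n * cfPi α n) with h
        rw [habs] at h; linarith
    rw [this, add_zero]
  rw [distNearestInt, hround, hval]
  simpa using habs

lemma coverage (hα : α ∈ Set.Ioo (0 : ℝ) 1) (hirr : Irrational α) {n : ℕ} (hn : 1 ≤ n)
    {N : ℤ} (hN : (cfQ α n + cfQ α (n + 1)) / 2 ≤ N) {t : ℤ} (ht : |t| ≤ N) :
    ∃ t' : ℤ, |t'| ≤ N ∧ ∃ m : ℤ,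
      0 < (t' : ℝ) * α - t * α - m ∧ (t' : ℝ) * α - t * α - m ≤ cfPi α n := by
  rw [abs_le] at ht
  have hq := one_le_cfQ hα hirr n
  have hq1 := one_le_cfQ hα hirr (n + 1)
  have hNN : cfQ α n + cfQ α (n + 1) - 1 ≤ 2 * N := by omega
  have hθ := theta_eq hα hirr n
  have hθ1 := theta_eq hα hirr (n + 1)
  have hpos := cfPi_pos hα hirr n
  have hpos1 := cfPi_pos hα hirr (n + 1)
  have hle : cfPi α (n + 1) ≤ cfPi α n := (cfPi_succ_lt hα hirr n).le
  rcases Nat.even_or_odd n with hev | hod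
  · rw [hev.neg_one_pow, one_mul] at hθ
    rw [(Even.add_one hev).neg_one_pow] at hθ1
    by_cases h : t + cfQ α n ≤ N
    · refine ⟨t + cfQ α n, by rw [abs_le]; omega, cfP α n, ?_, ?_⟩ <;> · push_cast; linarith
    · refine ⟨t - cfQ α (n + 1), by rw [abs_le]; omega, -cfP α (n + 1), ?_, ?_⟩ <;> · push_cast; linarith
  · rw [hod.neg_one_pow] at hθ
    rw [(Odd.add_one hod).neg_one_pow, one_mul] at hθ1
    by_cases h : -N ≤ t - cfQ α n
    · refine ⟨t - cfQ α n, by rw [abs_le]; omega, -cfP α n, ?_, ?_⟩ <;> · push_cast; linarith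
    · refine ⟨t + cfQ α (n + 1), by rw [abs_le]; omega, cfP α (n + 1), ?_, ?_⟩ <;> · push_cast; linarith

lemma addCircle_coe_eq_coe {y w : ℝ} :
    (y : AddCircle (1 : ℝ)) = (w : AddCircle (1 : ℝ)) ↔ ∃ m : ℤ, y - w = m := by
  rw [QuotientAddGroup.eq_iff_sub_mem, AddSubgroup.mem_zmultiples_iff]
  constructor
  · rintro ⟨k, hk⟩; exact ⟨k, by simpa using hk.symm⟩
  · rintro ⟨m, hm⟩; exact ⟨m, by simpa using hm.symm⟩

/-- **Maximal gap bound.** Let `α ∈ (0,1)` be irrational with convergent denominators `q_n`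
and let `N ≥ ⌊(q_n + q_{n+1})/2⌋`. Then every gap (connected component of the complement) of
the point set `{tα mod 1 : t = -N,…,N}` on the circle `ℝ/ℤ` has length at most `‖q_n α‖`. -/
theorem maximal_gap_bound (α : ℝ) (hα : α ∈ Set.Ioo (0 : ℝ) 1) (hirr : Irrational α)
    (n : ℕ) (hn : 1 ≤ n) (N : ℤ) (hN : (cfQ α n + cfQ α (n + 1)) / 2 ≤ N) :
    ∀ S : Set (AddCircle (1 : ℝ)),
      S = {z | ∃ t : ℤ, |t| ≤ N ∧ z = (((t : ℝ) * α : ℝ) : AddCircle (1 : ℝ))} →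
      ∀ z ∉ S,
        volume (connectedComponentIn Sᶜ z)
          ≤ ENNReal.ofReal (distNearestInt ((cfQ α n : ℝ) * α)) := by
  intro S hS z hz
  rw [distNearestInt_q hα hirr hn]
  set δ := cfPi α n with hδdef
  have hδpos : 0 < δ := cfPi_pos hα hirr n
  have hδhalf : δ < 1 / 2 := cfPi_lt_half hα hirr hn
  have hq := one_le_cfQ hα hirr n
  have hq1 := one_le_cfQ hα hirr (n + 1)
  have hN1 : 1 ≤ N := le_trans (by omega) hN
  obtain ⟨x, rfl⟩ := QuotientAddGroup.mk_surjective z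
  have hmem : ∀ y : ℝ, ((y : AddCircle (1 : ℝ)) ∈ S) ↔
      ∃ t : ℤ, |t| ≤ N ∧ ∃ m : ℤ, y - t * α = m := by
    intro y
    rw [hS]
    simp only [Set.mem_setOf_eq]
    constructor
    · rintro ⟨t, ht, he⟩
      exact ⟨t, ht, addCircle_coe_eq_coe.mp he⟩
    · rintro ⟨t, ht, m, hm⟩
      exact ⟨t, ht, addCircle_coe_eq_coe.mpr ⟨m, hm⟩⟩
  have hxnot : ∀ t m : ℤ, |t| ≤ N → x - t * α ≠ m := fun t m ht hc =>
    hz ((hmem x).mpr ⟨t, ht, m, hc⟩)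
  set f : ℤ → ℝ := fun t => x + Int.fract ((t : ℝ) * α - x) with hf
  have hfmem : ∀ t : ℤ, |t| ≤ N →
      f t ∈ Set.Ioo x (x + 1) ∧ ∃ m : ℤ, f t - (t : ℝ) * α = m := by
    intro t ht
    have h0 : 0 < Int.fract ((t : ℝ) * α - x) := by
      rcases lt_or_eq_of_le (Int.fract_nonneg ((t : ℝ) * α - x)) with h | h
      · exact h
      · exfalso
        apply hxnot t (-⌊(t : ℝ) * α - x⌋) ht
        have h1 : (t : ℝ) * α - x - ⌊(t : ℝ) * α - x⌋ = 0 := h.symm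
        push_cast
        linarith
    have h1 : Int.fract ((t : ℝ) * α - x) < 1 := Int.fract_lt_one _
    refine ⟨⟨by simp [hf]; linarith, by simp [hf]; linarith⟩, ⟨-⌊(t : ℝ) * α - x⌋, ?_⟩⟩
    simp only [hf, Int.fract]
    push_cast
    ring
  have hFofT : ∀ y : ℝ, y ∈ Set.Ioo x (x + 1) →
      ∀ t : ℤ, |t| ≤ N → ∀ m : ℤ, y - (t : ℝ) * α = m → f t = y := by
    intro y hy t ht m hm
    have h1 : (t : ℝ) * α - x = (y - x) - m := by linarith
    rw [hf]
    simp only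
    rw [h1, Int.fract_sub_intCast, Int.fract_eq_self.mpr ⟨by linarith [hy.1], by linarith [hy.2]⟩]
    ring
  set F := (Finset.Icc (-N) N).image f with hF
  have hFne : F.Nonempty := ⟨f 0, Finset.mem_image.mpr
    ⟨0, Finset.mem_Icc.mpr (by omega), rfl⟩⟩
  set u := F.min' hFne with hu
  set M := F.max' hFne with hM
  set l := M - 1 with hl
  have hFprop : ∀ y ∈ F, y ∈ Set.Ioo x (x + 1) ∧
      ∃ t : ℤ, |t| ≤ N ∧ ∃ m : ℤ, y - (t : ℝ) * α = m := by
    intro y hy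
    obtain ⟨t, htmem, rfl⟩ := Finset.mem_image.mp hy
    have ht : |t| ≤ N := abs_le.mpr (Finset.mem_Icc.mp htmem)
    obtain ⟨h1, m, h2⟩ := hfmem t ht
    exact ⟨h1, t, ht, m, h2⟩
  have hmemF : ∀ y : ℝ, y ∈ Set.Ioo x (x + 1) →
      (∃ t : ℤ, |t| ≤ N ∧ ∃ m : ℤ, y - (t : ℝ) * α = m) → y ∈ F := by
    rintro y hy ⟨t, ht, m, hm⟩
    exact Finset.mem_image.mpr ⟨t, Finset.mem_Icc.mpr (abs_le.mp ht), hFofT y hy t ht m hm⟩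
  obtain ⟨hudom, tu, htu, mu, hmu⟩ := hFprop u (F.min'_mem hFne)
  obtain ⟨hMdom, t0, ht0, m0, hm0⟩ := hFprop M (F.max'_mem hFne)
  have hlx : l < x := by simp only [hl]; linarith [hMdom.2]
  have hxl1 : x < l + 1 := by simp only [hl]; linarith [hMdom.1]
  -- the key gap bound : u ≤ l + δ
  obtain ⟨t', ht', m', hd1, hd2⟩ := coverage hα hirr hn hN ht0
  set y' := l + ((t' : ℝ) * α - t0 * α - m') with hy'
  have hy'T : y' - (t' : ℝ) * α = ((m0 - 1 - m' : ℤ) : ℝ) := by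
    push_cast
    simp only [hy', hl]
    linarith [hm0]
  have hy'gtx : x < y' := by
    rcases lt_trichotomy y' x with h | h | h
    · exfalso
      have hy'l : l < y' := by simp only [hy']; linarith
      have h1 : y' + 1 ∈ Set.Ioo x (x + 1) := by
        constructor
        · linarith [hMdom.1, hl ▸ hy'l]
        · linarith
      have h2 : y' + 1 - (t' : ℝ) * α = ((m0 - m' : ℤ) : ℝ) := by
        push_cast
        push_cast at hy'T
        linarith
      have h3 : y' + 1 ∈ F := hmemF _ h1 ⟨t', ht', _, h2⟩
      have h4 : y' + 1 ≤ M := F.le_max' _ h3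
      simp only [hy'] at h4
      linarith
    · exact absurd (h ▸ hy'T) (hxnot t' _ ht')
    · exact h
  have hy'lt : y' < x + 1 := by
    simp only [hy']
    have : l + δ < x + 1 := by linarith
    linarith
  have hy'F : y' ∈ F := hmemF _ ⟨hy'gtx, hy'lt⟩ ⟨t', ht', _, hy'T⟩
  have hul : u ≤ l + δ := le_trans (F.min'_le _ hy'F) (by simp only [hy']; linarith)
  have hxu : x < u := hudom.1
  have hlu : l < u := lt_trans hlx hxu
  have hul1 : u < l + 1 := by linarith
  -- the two open arcs
  set A : Set (AddCircle (1 : ℝ)) := ((↑) : ℝ → AddCircle (1 : ℝ)) '' Set.Ioo l u with hA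
  set A' : Set (AddCircle (1 : ℝ)) := ((↑) : ℝ → AddCircle (1 : ℝ)) '' Set.Ioo u (l + 1) with hA'
  have hopenmap : IsOpenMap ((↑) : ℝ → AddCircle (1 : ℝ)) := QuotientAddGroup.isOpenMap_coe
  have hAopen : IsOpen A := hopenmap _ isOpen_Ioo
  have hA'open : IsOpen A' := hopenmap _ isOpen_Ioo
  have hdisj : Disjoint A A' := by
    rw [Set.disjoint_left]
    rintro w ⟨y1, hy1, rfl⟩ ⟨y2, hy2, he⟩
    obtain ⟨m, hm⟩ := addCircle_coe_eq_coe.mp he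
    have h1 : (0 : ℝ) < m := by rw [← hm]; linarith [hy1.1, hy1.2, hy2.1, hy2.2]
    have h2 : (m : ℝ) < 1 := by rw [← hm]; linarith [hy1.1, hy1.2, hy2.1, hy2.2]
    have : (0 : ℤ) < m := by exact_mod_cast h1
    have : m < (1 : ℤ) := by exact_mod_cast h2
    omega
  have hSu : ((u : ℝ) : AddCircle (1 : ℝ)) ∈ S := (hmem u).mpr ⟨tu, htu, mu, hmu⟩
  have hSl : ((l : ℝ) : AddCircle (1 : ℝ)) ∈ S := (hmem l).mpr
    ⟨t0, ht0, m0 - 1, by push_cast; simp only [hl]; linarith [hm0]⟩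
  have hcover : Sᶜ ⊆ A ∪ A' := by
    intro w hw
    obtain ⟨y, rfl⟩ := QuotientAddGroup.mk_surjective w
    set y2 := l + Int.fract (y - l) with hy2
    have hy2eq : ((y2 : ℝ) : AddCircle (1 : ℝ)) = (y : AddCircle (1 : ℝ)) :=
      addCircle_coe_eq_coe.mpr ⟨-⌊y - l⌋, by simp only [hy2, Int.fract]; push_cast; ring⟩
    have hfr0 : Int.fract (y - l) ≠ 0 := by
      intro h0
      apply hw
      have : ((y : ℝ) : AddCircle (1 : ℝ)) = ((l : ℝ) : AddCircle (1 : ℝ)) := by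
        rw [← hy2eq, hy2, h0, add_zero]
      rw [this]
      exact hSl
    have hy2l : l < y2 := by
      simp only [hy2]
      have := lt_of_le_of_ne (Int.fract_nonneg (y - l)) (Ne.symm hfr0)
      linarith
    have hy2l1 : y2 < l + 1 := by
      simp only [hy2]
      linarith [Int.fract_lt_one (y - l)]
    have hy2u : y2 ≠ u := by
      intro h0
      apply hw
      rw [← hy2eq, h0]
      exact hSu
    rcases lt_or_gt_of_ne hy2u with h | h
    · exact Or.inl ⟨y2, ⟨hy2l, h⟩, hy2eq⟩
    · exact Or.inr ⟨y2, ⟨h, hy2l1⟩, hy2eq⟩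
  have hzmem : ((x : ℝ) : AddCircle (1 : ℝ)) ∈ Sᶜ := hz
  have hCsub : connectedComponentIn Sᶜ ((x : ℝ) : AddCircle (1 : ℝ)) ⊆ A := by
    apply IsPreconnected.subset_left_of_subset_union hAopen hA'open hdisj
    · exact Set.Subset.trans (connectedComponentIn_subset _ _) hcover
    · exact ⟨_, mem_connectedComponentIn hzmem, ⟨x, ⟨hlx, hxu⟩, rfl⟩⟩
    · exact isPreconnected_connectedComponentIn
  have hpre : (QuotientAddGroup.mk ⁻¹' A : Set ℝ) ∩ Set.Ioc l (l + 1) = Set.Ioo l u := by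
    ext y
    constructor
    · rintro ⟨hyA, hyI⟩
      obtain ⟨w, hw, he⟩ := hyA
      obtain ⟨m, hm⟩ := addCircle_coe_eq_coe.mp he
      have h1 : (m : ℝ) < 1 := by rw [← hm]; linarith [hw.1, hw.2, hyI.1, hyI.2, hul1]
      have h2 : (-1 : ℝ) < m := by rw [← hm]; linarith [hw.1, hw.2, hyI.1, hyI.2, hul1]
      have h3 : m = 0 := by
        have : m < (1 : ℤ) := by exact_mod_cast h1
        have : (-1 : ℤ) < m := by exact_mod_cast h2
        omega
      rw [h3] at hm
      push_cast at hm
      have : w = y := by linarith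
      rwa [← this]
    · intro hy
      exact ⟨⟨y, hy, rfl⟩, ⟨hy.1, by linarith [hy.2]⟩⟩
  calc volume (connectedComponentIn Sᶜ ((x : ℝ) : AddCircle (1 : ℝ)))
      ≤ volume A := measure_mono hCsub
    _ = volume (QuotientAddGroup.mk ⁻¹' A ∩ Set.Ioc l (l + 1)) := by
        rw [AddCircle.add_projection_respects_measure 1 l hAopen.measurableSet]
    _ = ENNReal.ofReal (u - l) := by rw [hpre, Real.volume_Ioo]
    _ ≤ ENNReal.ofReal δ := ENNReal.ofReal_le_ofReal (by linarith)
end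

section
/- Let φ = (1+√5)/2, δ ∈ (0,1), c > 0, and let (q_n) be the Fibonacci sequence q_0 = q_1 = 1, q_n = q_{n-1} + q_{n-2}. Then for every β ∈ (0, δ], liminf_{n→∞} c^β · q_n · ((q_n + q_{n+1} + 1)/2 + 1)^{-β/δ} > 0, and for β = δ this liminf is at least 8 c^δ (1+√5)^{-2}. -/
open Filter
open scoped ENNReal
open scoped goldenRatio

private lemma golden_aux_psi_abs (m : ℕ) : |ψ ^ m| ≤ 1 := by
  rw [abs_pow]
  refine pow_le_one₀ (abs_nonneg _) ?_
  rw [abs_of_neg Real.goldenConj_neg]; linarith [Real.neg_one_lt_goldenConj]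

private lemma golden_one_le_pow (m : ℕ) : (1:ℝ) ≤ φ ^ m :=
  one_le_pow₀ Real.one_lt_goldenRatio.le

/-- **Key liminf computation for the golden-ratio classical Denjoy example.** With `q_n` the
Fibonacci sequence, `δ ∈ (0,1)` and `c > 0`, for every `β ∈ (0, δ]` the quantity
`liminf_n c^β q_n ((q_n + q_{n+1} + 1)/2 + 1)^{-β/δ}` is positive, and for `β = δ` it is at
least `8 c^δ (1+√5)^{-2}`. -/
theorem golden_denjoy_liminf (δ : ℝ) (hδ : δ ∈ Set.Ioo (0 : ℝ) 1) (c : ℝ) (hc : 0 < c)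
    (q : ℕ → ℕ) (hq0 : q 0 = 1) (hq1 : q 1 = 1)
    (hqrec : ∀ n : ℕ, q (n + 2) = q (n + 1) + q n) :
    ∀ β : ℝ, 0 < β → β ≤ δ →
      (0 < Filter.liminf (fun n : ℕ => ENNReal.ofReal
          (c ^ β * (q n : ℝ) *
            (((q n : ℝ) + (q (n + 1) : ℝ) + 1) / 2 + 1) ^ (-(β / δ)))) Filter.atTop) ∧
      (β = δ →
        ENNReal.ofReal (8 * c ^ δ * (1 + Real.sqrt 5) ^ (-2 : ℤ)) ≤
          Filter.liminf (fun n : ℕ => ENNReal.ofReal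
            (c ^ β * (q n : ℝ) *
              (((q n : ℝ) + (q (n + 1) : ℝ) + 1) / 2 + 1) ^ (-(β / δ)))) Filter.atTop) := by
  intro β hβ hβδ
  obtain ⟨hδ0, hδ1⟩ := hδ
  -- basic facts about q
  have hpm : ∀ n, 1 ≤ q n ∧ q n ≤ q (n + 1) := by
    intro n
    induction n with
    | zero => simp [hq0, hq1]
    | succ m ih =>
      refine ⟨le_trans ih.1 ih.2, ?_⟩
      rw [hqrec m]; omega
  have hpos : ∀ n, 1 ≤ q n := fun n => (hpm n).1
  have hmono : ∀ n, q n ≤ q (n + 1) := fun n => (hpm n).2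
  have hdouble : ∀ n, q (n + 1) ≤ 2 * q n := by
    intro n
    cases n with
    | zero => simp [hq0, hq1]
    | succ m => rw [hqrec m]; have := hmono m; omega
  have h7 : ∀ n, q n + q (n + 1) + 3 ≤ 7 * q n := by
    intro n
    have h1 := hdouble n
    have h2 := hpos n
    omega
  have hfib : ∀ n, q n = Nat.fib (n + 1) := by
    intro n
    induction n using Nat.twoStepInduction with
    | zero => simpa using hq0
    | one => simpa using hq1
    | more m ih1 ih2 =>
      rw [hqrec m, ih1, ih2, Nat.add_comm]
      exact (Nat.fib_add_two).symm
  have hs5 : (0:ℝ) < Real.sqrt 5 := Real.sqrt_pos.mpr (by norm_num)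
  have hφ1 : (1:ℝ) < φ := Real.one_lt_goldenRatio
  have hφpos : (0:ℝ) < φ := Real.goldenRatio_pos
  -- Binet bounds
  have hlow : ∀ n, (φ ^ (n + 1) - 1) / Real.sqrt 5 ≤ (q n : ℝ) := by
    intro n
    rw [hfib n, Real.coe_fib_eq]
    have h1 : ψ ^ (n + 1) ≤ 1 := le_of_abs_le (golden_aux_psi_abs (n + 1))
    gcongr
  have hup : ∀ n, (q n : ℝ) ≤ (φ ^ (n + 1) + 1) / Real.sqrt 5 := by
    intro n
    rw [hfib n, Real.coe_fib_eq]
    have h1 : -1 ≤ ψ ^ (n + 1) := neg_le_of_abs_le (golden_aux_psi_abs (n + 1))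
    gcongr
    linarith
  -- the base of the rpow
  set X : ℕ → ℝ := fun n => (((q n : ℝ) + (q (n + 1) : ℝ) + 1) / 2 + 1) with hX
  have hq1le : ∀ n, (1:ℝ) ≤ (q n : ℝ) := by
    intro n; exact_mod_cast hpos n
  have hX1 : ∀ n, (1:ℝ) ≤ X n := by
    intro n
    have := hq1le n; have := hq1le (n + 1)
    simp only [hX]; nlinarith
  have hXpos : ∀ n, (0:ℝ) < X n := fun n => lt_of_lt_of_le one_pos (hX1 n)
  have hcβ : (0:ℝ) < c ^ β := Real.rpow_pos_of_pos hc β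
  -- pointwise lower bound 2 c^β / 7
  have key1 : ∀ n, 2 * c ^ β / 7 ≤ c ^ β * (q n : ℝ) * X n ^ (-(β / δ)) := by
    intro n
    have hexp : X n ^ (-1 : ℝ) ≤ X n ^ (-(β / δ)) := by
      apply Real.rpow_le_rpow_of_exponent_le (hX1 n)
      have : β / δ ≤ 1 := by rw [div_le_one hδ0]; exact hβδ
      linarith
    have h2 : (2:ℝ) / 7 ≤ (q n : ℝ) * X n ^ (-1 : ℝ) := by
      rw [Real.rpow_neg_one, ← div_eq_mul_inv]
      rw [div_le_div_iff₀ (by norm_num) (hXpos n)]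
      have h7' : (q n : ℝ) + (q (n + 1) : ℝ) + 3 ≤ 7 * (q n : ℝ) := by
        exact_mod_cast h7 n
      simp only [hX]
      linarith
    calc 2 * c ^ β / 7 = c ^ β * (2 / 7) := by ring
    _ ≤ c ^ β * ((q n : ℝ) * X n ^ (-1 : ℝ)) := by
        exact mul_le_mul_of_nonneg_left h2 hcβ.le
    _ ≤ c ^ β * ((q n : ℝ) * X n ^ (-(β / δ))) := by
        apply mul_le_mul_of_nonneg_left _ hcβ.le
        apply mul_le_mul_of_nonneg_left hexp (by positivity)
    _ = c ^ β * (q n : ℝ) * X n ^ (-(β / δ)) := by ring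
  constructor
  · -- positivity of liminf
    have hle : ENNReal.ofReal (2 * c ^ β / 7) ≤
        Filter.liminf (fun n : ℕ => ENNReal.ofReal
          (c ^ β * (q n : ℝ) * X n ^ (-(β / δ)))) Filter.atTop := by
      refine Filter.le_liminf_of_le (by isBoundedDefault) ?_
      exact Filter.Eventually.of_forall fun n => ENNReal.ofReal_le_ofReal (key1 n)
    exact lt_of_lt_of_le (ENNReal.ofReal_pos.mpr (by positivity)) hle
  · -- the β = δ case
    intro hβeq
    have hδδ : -(β / δ) = (-1 : ℝ) := by rw [hβeq, div_self hδ0.ne']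
    have hcc : c ^ δ = c ^ β := by rw [hβeq]
    simp only [hδδ, hcc]
    -- lower-bound sequence
    set b : ℕ → ℝ := fun n =>
      2 * c ^ β * ((φ ^ (n + 1) - 1) / (φ ^ (n + 3) + 1 + 3 * Real.sqrt 5)) with hb
    have hDpos : ∀ n : ℕ, (0:ℝ) < φ ^ (n + 3) + 1 + 3 * Real.sqrt 5 := by
      intro n; positivity
    -- b n ≤ term n
    have hble : ∀ n, b n ≤ c ^ β * (q n : ℝ) * X n ^ (-1 : ℝ) := by
      intro n
      rw [Real.rpow_neg_one]
      have hq2 : (q n : ℝ) + (q (n + 1) : ℝ) = (q (n + 2) : ℝ) := by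
        rw [hqrec n]; push_cast; ring
      have hXeq : X n = ((q (n + 2) : ℝ) + 3) / 2 := by
        simp only [hX]; rw [← hq2]; ring
      have hDen : (0:ℝ) < (q (n + 2) : ℝ) + 3 := by
        have := hq1le (n + 2); linarith
      have hBpos : (0:ℝ) < (φ ^ (n + 3) + 1) / Real.sqrt 5 + 3 := by positivity
      have step1 : (φ ^ (n + 1) - 1) / (φ ^ (n + 3) + 1 + 3 * Real.sqrt 5) =
          ((φ ^ (n + 1) - 1) / Real.sqrt 5) / ((φ ^ (n + 3) + 1) / Real.sqrt 5 + 3) := by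
        rw [div_eq_div_iff (hDpos n).ne' hBpos.ne']
        field_simp
      have step2 : ((φ ^ (n + 1) - 1) / Real.sqrt 5) / ((φ ^ (n + 3) + 1) / Real.sqrt 5 + 3) ≤
          (q n : ℝ) / ((q (n + 2) : ℝ) + 3) := by
        apply div_le_div₀ (Nat.cast_nonneg _) (hlow n) hDen
        have := hup (n + 2)
        linarith
      have step3 : c ^ β * (q n : ℝ) * (X n)⁻¹ = 2 * c ^ β * ((q n : ℝ) / ((q (n + 2) : ℝ) + 3)) := by
        rw [hXeq, inv_div]
        ring
      rw [step3]
      simp only [hb]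
      rw [step1]
      have h2c : (0:ℝ) ≤ 2 * c ^ β := by positivity
      exact mul_le_mul_of_nonneg_left step2 h2c
    -- tendsto of b
    have hTpos : (0:ℝ) < φ ^ 3 := by positivity
    have hr : Filter.Tendsto (fun n : ℕ => (φ⁻¹) ^ n) Filter.atTop (nhds 0) :=
      tendsto_pow_atTop_nhds_zero_of_lt_one (by positivity) (inv_lt_one_of_one_lt₀ hφ1)
    have heq : ∀ n : ℕ, (φ ^ (n + 1) - 1) / (φ ^ (n + 3) + 1 + 3 * Real.sqrt 5) =
        (φ - (φ⁻¹) ^ n) / (φ ^ 3 + (1 + 3 * Real.sqrt 5) * (φ⁻¹) ^ n) := by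
      intro n
      have hdpos : (0:ℝ) < φ ^ 3 + (1 + 3 * Real.sqrt 5) * (φ⁻¹) ^ n := by positivity
      rw [div_eq_div_iff (hDpos n).ne' hdpos.ne']
      have ht : φ ^ n * (φ⁻¹) ^ n = 1 := by rw [← mul_pow, mul_inv_cancel₀ hφpos.ne', one_pow]
      linear_combination (φ * (1 + 3 * Real.sqrt 5) + φ ^ 3) * ht
    have htend0 : Filter.Tendsto
        (fun n : ℕ => (φ - (φ⁻¹) ^ n) / (φ ^ 3 + (1 + 3 * Real.sqrt 5) * (φ⁻¹) ^ n))
        Filter.atTop (nhds (φ / φ ^ 3)) := by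
      have hnum : Filter.Tendsto (fun n : ℕ => φ - (φ⁻¹) ^ n) Filter.atTop (nhds φ) := by
        have := hr.const_sub φ
        simpa using this
      have hden : Filter.Tendsto (fun n : ℕ => φ ^ 3 + (1 + 3 * Real.sqrt 5) * (φ⁻¹) ^ n)
          Filter.atTop (nhds (φ ^ 3)) := by
        have := (hr.const_mul (1 + 3 * Real.sqrt 5)).const_add (φ ^ 3)
        simpa using this
      exact hnum.div hden hTpos.ne'
    have htend : Filter.Tendsto b Filter.atTop (nhds (2 * c ^ β * (φ / φ ^ 3))) := by
      apply Filter.Tendsto.const_mul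
      exact Filter.Tendsto.congr (fun n => (heq n).symm) htend0
    have htendE : Filter.Tendsto (fun n => ENNReal.ofReal (b n)) Filter.atTop
        (nhds (ENNReal.ofReal (2 * c ^ β * (φ / φ ^ 3)))) :=
      ENNReal.tendsto_ofReal htend
    have hliminfb : Filter.liminf (fun n => ENNReal.ofReal (b n)) Filter.atTop =
        ENNReal.ofReal (2 * c ^ β * (φ / φ ^ 3)) := htendE.liminf_eq
    have hconst : 8 * c ^ β * (1 + Real.sqrt 5) ^ (-2 : ℤ) = 2 * c ^ β * (φ / φ ^ 3) := by
      have h15 : (0:ℝ) < 1 + Real.sqrt 5 := by positivity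
      rw [zpow_neg, show ((2:ℤ)) = ((2:ℕ) : ℤ) from rfl, zpow_natCast]
      simp only [Real.goldenRatio]
      field_simp
      ring
    calc ENNReal.ofReal (8 * c ^ β * (1 + Real.sqrt 5) ^ (-2 : ℤ))
        = ENNReal.ofReal (2 * c ^ β * (φ / φ ^ 3)) := by rw [hconst]
      _ = Filter.liminf (fun n => ENNReal.ofReal (b n)) Filter.atTop := hliminfb.symm
      _ ≤ Filter.liminf (fun n : ℕ => ENNReal.ofReal
            (c ^ β * (q n : ℝ) * X n ^ (-1 : ℝ))) Filter.atTop := by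
          exact Filter.liminf_le_liminf
            (Filter.Eventually.of_forall fun n => ENNReal.ofReal_le_ofReal (hble n))
            (by isBoundedDefault) (by isBoundedDefault)
end

section
/- Kra–Schmeling tail bound: let δ ∈ (0,1) and let (ℓ_n)_{n∈ℤ} be a sequence of positive reals with Σℓ_n = 1 and liminf_{n→±∞} ln|ℓ_n - ℓ_{n+1}|/ln ℓ_n = 1+δ. Then for every θ ∈ (0,δ) there exists s_θ ≥ 1 such that ℓ_n > n^{-1/θ} for all integers n > s_θ. -/
open Filter

lemma log_ge_one_sub_inv {y : ℝ} (hy : 0 < y) : 1 - 1/y ≤ Real.log y := by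
  have h := Real.log_le_sub_one_of_pos (show (0:ℝ) < 1/y by positivity)
  rw [Real.log_div one_ne_zero (ne_of_gt hy), Real.log_one] at h
  linarith

lemma log_one_sub_ge {x : ℝ} (h0 : 0 ≤ x) (h2 : x ≤ 1/2) : -(2*x) ≤ Real.log (1 - x) := by
  have hpos : (0:ℝ) < 1 - x := by linarith
  have h := log_ge_one_sub_inv hpos
  have hb : 1/(1-x) ≤ 1 + 2*x := by
    rw [div_le_iff₀ hpos]; nlinarith
  linarith

lemma key_step {p q a : ℝ} (hp : 1 ≤ p) (ha : 1 ≤ a) (h1 : 2 * (a+1)^(-q) ≤ 1/2)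
    (h2 : 4 * (a+1)^(-q) < p / (a+1)) :
    (a+1) ^ (-p) < a ^ (-p) * (1 - 2 * (a+1)^(-q)) := by
  set b := a + 1 with hbdef
  have ha0 : (0:ℝ) < a := by linarith
  have hb0 : (0:ℝ) < b := by rw [hbdef]; linarith
  set x := 2 * b^(-q) with hxdef
  have hx0 : 0 ≤ x := by positivity
  have hlogdiff : 1/b ≤ Real.log b - Real.log a := by
    have h := log_ge_one_sub_inv (show (0:ℝ) < b/a by positivity)
    rw [Real.log_div (ne_of_gt hb0) (ne_of_gt ha0)] at h
    have he : 1 - 1/(b/a) = 1/b := by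
      rw [one_div_div, hbdef]; field_simp; ring
    linarith [he ▸ h]
  have hlog1x : -(2*x) ≤ Real.log (1 - x) := log_one_sub_ge hx0 (by linarith)
  have hx1 : (0:ℝ) < 1 - x := by linarith
  have hkey : Real.log (b^(-p)) < Real.log (a^(-p) * (1-x)) := by
    rw [Real.log_rpow hb0, Real.log_mul (by positivity) (ne_of_gt hx1), Real.log_rpow ha0]
    have hmul : p * (1/b) ≤ p * (Real.log b - Real.log a) :=
      mul_le_mul_of_nonneg_left hlogdiff (by linarith)
    have hdiv : p / b = p * (1/b) := by ring
    have hx2 : 2 * x = 4 * b^(-q) := by rw [hxdef]; ring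
    linarith
  exact (Real.log_lt_log_iff (by positivity) (by positivity)).mp hkey

set_option maxHeartbeats 800000 in
/-- **Kra–Schmeling tail bound (Lemma 2.3 of [KS]).** Let `δ ∈ (0,1)` and let
`(ℓ_n)_{n∈ℤ}` be a Denjoy sequence of class `δ`: positive terms with `∑ ℓ_n = 1` and
`liminf_{n→±∞} ln|ℓ_n - ℓ_{n+1}|/ln ℓ_n = 1+δ`. Then for every `θ ∈ (0,δ)` there is
`s_θ ≥ 1` with `ℓ_n > n^{-1/θ}` for all integers `n > s_θ`. -/
theorem kra_schmeling_tail_bound (δ : ℝ) (hδ : δ ∈ Set.Ioo (0 : ℝ) 1)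
    (ℓ : ℤ → ℝ) (hpos : ∀ n : ℤ, 0 < ℓ n) (hsum : ∑' n : ℤ, ℓ n = 1)
    (hliminf : Filter.liminf (fun n : ℤ => Real.log |ℓ n - ℓ (n + 1)| / Real.log (ℓ n))
        (Filter.atTop ⊔ Filter.atBot) = 1 + δ) :
    ∀ θ : ℝ, 0 < θ → θ < δ →
      ∃ s : ℕ, 1 ≤ s ∧ ∀ n : ℤ, (s : ℤ) < n → (n : ℝ) ^ (-(1 / θ)) < ℓ n := by
  intro θ hθ0 hθδ
  obtain ⟨hδ0, hδ1⟩ := hδ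
  set θ' := (θ + δ)/2 with hθ'def
  have hθ'θ : θ < θ' := by rw [hθ'def]; linarith
  have hθ'δ : θ' < δ := by rw [hθ'def]; linarith
  have hθ'0 : 0 < θ' := by linarith
  have hθ'1 : θ' < 1 := by linarith
  set p := 1/θ with hpdef
  set q := θ'/θ with hqdef
  have hp0 : 0 < p := by rw [hpdef]; positivity
  have hp1 : 1 < p := by
    rw [hpdef, lt_div_iff₀ hθ0]; linarith
  have hq1 : 1 < q := by
    rw [hqdef, lt_div_iff₀ hθ0]; linarith
  have hpq : -p * θ' = -q := by rw [hpdef, hqdef]; field_simp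
  -- summability and decay
  have hsummable : Summable ℓ := by
    by_contra h
    rw [tsum_eq_zero_of_not_summable h] at hsum; norm_num at hsum
  have htend : Tendsto ℓ atTop (nhds 0) :=
    hsummable.tendsto_cofinite_zero.mono_left atTop_le_cofinite
  -- smallness
  have hsmall : ∀ᶠ n : ℤ in atTop, ℓ n ^ θ' ≤ 1/2 ∧ ℓ n < 1 := by
    have h2 : (0:ℝ) < (2:ℝ)^(-(1/θ')) := by positivity
    filter_upwards [htend.eventually_lt_const h2] with n hn
    constructor
    · have h3 : ℓ n ^ θ' ≤ ((2:ℝ)^(-(1/θ')))^θ' :=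
        Real.rpow_le_rpow (hpos n).le hn.le hθ'0.le
      rw [← Real.rpow_mul (by norm_num : (0:ℝ) ≤ 2),
        show -(1/θ') * θ' = -1 by field_simp, Real.rpow_neg_one] at h3
      linarith
    · calc ℓ n < (2:ℝ)^(-(1/θ')) := hn
        _ ≤ 1 := Real.rpow_le_one_of_one_le_of_nonpos one_le_two (neg_nonpos.mpr (by positivity))
  -- liminf extraction
  have hdelta : ∀ᶠ n : ℤ in atTop,
      1 + θ' ≤ Real.log |ℓ n - ℓ (n + 1)| / Real.log (ℓ n) := by
    rw [Filter.liminf_eq] at hliminf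
    have hne : {a : ℝ | ∀ᶠ n : ℤ in atTop ⊔ atBot,
        a ≤ Real.log |ℓ n - ℓ (n + 1)| / Real.log (ℓ n)}.Nonempty := by
      by_contra h
      rw [Set.not_nonempty_iff_eq_empty] at h
      rw [h, Real.sSup_empty] at hliminf; linarith
    obtain ⟨a, haS, hlt⟩ := exists_lt_of_lt_csSup hne
      (show 1 + θ' < _ by rw [hliminf]; linarith)
    have h := (eventually_sup.mp haS).1
    filter_upwards [h] with n hn
    linarith
  -- recursion eventually
  have hrec : ∀ᶠ n : ℤ in atTop, ℓ n * (1 - ℓ n ^ θ') ≤ ℓ (n+1) ∧ ℓ n ^ θ' ≤ 1/2 := by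
    filter_upwards [hdelta, hsmall] with n hd hs
    obtain ⟨hhalf, hlt1⟩ := hs
    refine ⟨?_, hhalf⟩
    have hlog : Real.log (ℓ n) < 0 := Real.log_neg (hpos n) hlt1
    have h1 : Real.log |ℓ n - ℓ (n+1)| ≤ (1+θ') * Real.log (ℓ n) :=
      (le_div_iff_of_neg hlog).mp hd
    have habs : |ℓ n - ℓ (n+1)| ≤ ℓ n ^ (1+θ') := by
      rcases eq_or_ne (ℓ n - ℓ (n+1)) 0 with h0 | h0
      · rw [h0, abs_zero]; exact (Real.rpow_pos_of_pos (hpos n) _).le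
      · have hpos' : 0 < |ℓ n - ℓ (n+1)| := abs_pos.mpr h0
        rw [← Real.exp_log hpos', Real.rpow_def_of_pos (hpos n)]
        exact Real.exp_le_exp.mpr (by linarith)
    have h2 : ℓ n - ℓ (n+1) ≤ ℓ n ^ (1+θ') := le_trans (le_abs_self _) habs
    have hsplit : ℓ n ^ ((1:ℝ)+θ') = ℓ n * ℓ n ^ θ' := by
      rw [Real.rpow_add (hpos n), Real.rpow_one]
    nlinarith [h2, hsplit]
  -- arithmetic eventually
  have harith : ∀ᶠ n : ℤ in atTop,
      max 4 (8/p) ≤ ((n:ℝ)+1)^(q-1) ∧ (1:ℤ) ≤ n := by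
    have t1 : Tendsto (fun n : ℤ => (n:ℝ)+1) atTop atTop :=
      tendsto_atTop_add_const_right atTop 1 tendsto_intCast_atTop_atTop
    have t2 : Tendsto (fun n : ℤ => ((n:ℝ)+1)^(q-1)) atTop atTop :=
      (tendsto_rpow_atTop (by linarith : (0:ℝ) < q-1)).comp t1
    exact (t2.eventually_ge_atTop _).and (eventually_ge_atTop 1)
  obtain ⟨N, hN⟩ := eventually_atTop.mp (hrec.and harith)
  -- step lemma
  have hstep : ∀ n : ℤ, N ≤ n → (n:ℝ)^(-p) ≤ ℓ n → ((n:ℝ)+1)^(-p) < ℓ (n+1) := by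
    intro n hn hln
    obtain ⟨⟨hrec', hhalf⟩, harith', hn1⟩ := hN n hn
    have hnn : (1:ℝ) ≤ (n:ℝ) := by exact_mod_cast hn1
    set B := (n:ℝ) + 1 with hBdef
    have hb0 : (0:ℝ) < B := by rw [hBdef]; linarith
    have hb2 : (2:ℝ) ≤ B := by rw [hBdef]; linarith
    set r := B^(q-1) with hrdef
    have hr0 : 0 < r := by rw [hrdef]; positivity
    have hbq : B^(-q) = (r*B)⁻¹ := by
      have h : r * B = B^q := by
        rw [hrdef]
        conv_rhs => rw [show q = (q-1)+1 by ring]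
        rw [Real.rpow_add hb0, Real.rpow_one]
      rw [h, Real.rpow_neg hb0.le]
    have h4 : (4:ℝ) ≤ r := le_trans (le_max_left _ _) harith'
    have h8p : 8/p ≤ r := le_trans (le_max_right _ _) harith'
    have hrB : (0:ℝ) < r*B := by positivity
    have hrB8 : (8:ℝ) ≤ r*B := by nlinarith
    have hcond1 : 2 * B^(-q) ≤ 1/2 := by
      rw [hbq]
      have : (r*B)⁻¹ ≤ (8:ℝ)⁻¹ := inv_anti₀ (by norm_num) hrB8
      linarith
    have hcond2 : 4 * B^(-q) < p / B := by
      rw [hbq, ← div_eq_mul_inv, div_lt_div_iff₀ hrB hb0]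
      have hpr : 8 ≤ r * p := by rwa [div_le_iff₀ hp0] at h8p
      nlinarith
    have hkey := key_step hp1.le hnn hcond1 hcond2
    rcases le_or_gt (ℓ n) (2 * B^(-p)) with hcase | hcase
    · -- small case: use key inequality
      have hθexp : ℓ n ^ θ' ≤ 2 * B^(-q) := by
        have h1 : ℓ n ^ θ' ≤ (2 * B^(-p))^θ' :=
          Real.rpow_le_rpow (hpos n).le hcase hθ'0.le
        have h2 : (2 * B^(-p))^θ' = 2^θ' * B^(-q) := by
          rw [Real.mul_rpow (by norm_num) (by positivity),
            ← Real.rpow_mul hb0.le, hpq]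
        have h3 : (2:ℝ)^θ' ≤ 2 := by
          calc (2:ℝ)^θ' ≤ (2:ℝ)^(1:ℝ) :=
            Real.rpow_le_rpow_of_exponent_le one_le_two hθ'1.le
          _ = 2 := Real.rpow_one 2
        have h5 : (0:ℝ) ≤ B^(-q) := by positivity
        rw [h2] at h1
        calc ℓ n ^ θ' ≤ 2^θ' * B^(-q) := h1
          _ ≤ 2 * B^(-q) := mul_le_mul_of_nonneg_right h3 h5
      have hmul : (n:ℝ)^(-p) * (1 - 2*B^(-q)) ≤ ℓ n * (1 - ℓ n ^ θ') := by
        apply mul_le_mul hln (by linarith) (by linarith) (hpos n).le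
      calc B^(-p) < (n:ℝ)^(-p) * (1 - 2*B^(-q)) := hkey
        _ ≤ ℓ n * (1 - ℓ n ^ θ') := hmul
        _ ≤ ℓ (n+1) := hrec'
    · -- large case
      have hpnn : (0:ℝ) ≤ ℓ n ^ θ' := Real.rpow_nonneg (hpos n).le _
      calc B^(-p) < ℓ n * (1/2) := by linarith
        _ ≤ ℓ n * (1 - ℓ n ^ θ') := by nlinarith [hpos n, hhalf]
        _ ≤ ℓ (n+1) := hrec'
  -- base existence
  set K := max N 1 with hKdef
  have hK1 : (1:ℤ) ≤ K := le_max_right N 1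
  have hKN : N ≤ K := le_max_left N 1
  have hbase : ∃ M : ℤ, K ≤ M ∧ (M:ℝ)^(-p) ≤ ℓ M := by
    by_contra hcon
    push_neg at hcon
    have hsumq : Summable (fun k : ℕ => ((k:ℝ)+1)^(-q)) := by
      have h := Real.summable_one_div_nat_rpow.mpr hq1
      have h2 := h.comp_injective Nat.succ_injective
      refine h2.congr fun k => ?_
      show 1 / ((k.succ : ℕ):ℝ)^q = ((k:ℝ)+1)^(-q)
      rw [Real.rpow_neg (by positivity), one_div]
      push_cast
      ring_nf
    set C := ∑' k : ℕ, ((k:ℝ)+1)^(-q) with hCdef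
    have hsumbd : ∀ t : ℕ, ∑ k ∈ Finset.range t, ((k:ℝ)+1)^(-q) ≤ C :=
      fun t => Summable.sum_le_tsum _ (fun k _ => by positivity) hsumq
    have hlogrec : ∀ m : ℤ, K ≤ m →
        Real.log (ℓ K) - 2 * ∑ k ∈ Finset.range (m - K).toNat, ((k:ℝ)+1)^(-q)
          ≤ Real.log (ℓ m) := by
      refine Int.le_induction ?_ ?_
      · simp
      · intro m hm ih
        obtain ⟨⟨hrec', hhalf⟩, _, hm1⟩ := hN m (le_trans hKN hm)
        have hm1' : (1:ℝ) ≤ (m:ℝ) := by exact_mod_cast le_trans hK1 hm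
        have hmR : (0:ℝ) < (m:ℝ) := by linarith
        have hmq : ℓ m ^ θ' ≤ (m:ℝ)^(-q) := by
          have h1 : ℓ m ^ θ' ≤ ((m:ℝ)^(-p))^θ' :=
            Real.rpow_le_rpow (hpos m).le (hcon m hm).le hθ'0.le
          rwa [← Real.rpow_mul hmR.le, hpq] at h1
        have hpnn : (0:ℝ) ≤ ℓ m ^ θ' := Real.rpow_nonneg (hpos m).le _
        have hfac : (0:ℝ) < 1 - ℓ m ^ θ' := by linarith
        have hlog1 : Real.log (ℓ m) + Real.log (1 - ℓ m ^ θ') ≤ Real.log (ℓ (m+1)) := by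
          rw [← Real.log_mul (ne_of_gt (hpos m)) (ne_of_gt hfac)]
          exact (Real.log_le_log_iff (mul_pos (hpos m) hfac) (hpos (m+1))).mpr hrec'
        have hlog2 : -(2 * (ℓ m ^ θ')) ≤ Real.log (1 - ℓ m ^ θ') :=
          log_one_sub_ge hpnn hhalf
        have hterm : (m:ℝ)^(-q) ≤ (((m - K).toNat : ℝ)+1)^(-q) := by
          apply Real.rpow_le_rpow_of_nonpos (by positivity) ?_ (by linarith)
          have h1 : ((m-K).toNat : ℤ) + 1 ≤ m := by omega
          exact_mod_cast h1
        have hcount : ((m + 1) - K).toNat = (m - K).toNat + 1 := by omega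
        rw [hcount, Finset.sum_range_succ]
        linarith
    have hlb : ∀ m : ℤ, K ≤ m → Real.exp (Real.log (ℓ K) - 2*C) ≤ ℓ m := by
      intro m hm
      have h1 := hlogrec m hm
      have h2 := hsumbd (m-K).toNat
      calc Real.exp (Real.log (ℓ K) - 2*C) ≤ Real.exp (Real.log (ℓ m)) :=
        Real.exp_le_exp.mpr (by linarith)
        _ = ℓ m := Real.exp_log (hpos m)
    obtain ⟨m, hm1, hm2⟩ :=
      ((htend.eventually_lt_const (Real.exp_pos (Real.log (ℓ K) - 2*C))).and
        (eventually_ge_atTop K)).exists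
    exact absurd (hlb m hm2) (not_le.mpr hm1)
  obtain ⟨M, hMK, hM⟩ := hbase
  have hM1 : (1:ℤ) ≤ M := le_trans hK1 hMK
  have hMN : N ≤ M := le_trans hKN hMK
  have hind : ∀ n : ℤ, M + 1 ≤ n → (n:ℝ)^(-p) < ℓ n := by
    refine Int.le_induction ?_ ?_
    · have h := hstep M hMN hM
      have hc : ((M+1 : ℤ):ℝ) = (M:ℝ)+1 := by push_cast; ring
      rwa [hc]
    · intro n hn ih
      have h := hstep n (by omega) ih.le
      have hc : ((n+1 : ℤ):ℝ) = (n:ℝ)+1 := by push_cast; ring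
      rwa [hc]
  refine ⟨M.toNat, by omega, fun n hn => ?_⟩
  have hn' : M + 1 ≤ n := by omega
  exact hind n hn'
end
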